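/- arXiv:2202.08363 — 9 statements merged into one kernel-verified Lean document; each statement's English description precedes it below -/
import Mathlib

section
/- Fix a model M = (a,b,c) ∈ ℝ³, γ > 0, and P > 0 solving the Riccati equation P = (a²/(P + γ²c² − 1) + γ⁻²)⁻¹ with P + γ²c² − 1 > 0. Fix t ≥ 0, sequences u(0),…,u(t) and y(0),…,y(t) in ℝ, and ξ ∈ ℝ. Then the supremum, over all disturbance sequences w(0),…,w(t) ∈ ℝ and initial states x(0) ∈ ℝ such that the trajectory x(τ+1) = a·x(τ) + b·u(τ) + w(τ) satisfies x(t+1) = ξ, of Σ_{τ=0}^{t} x(τ)² − γ² Σ_{τ=0}^{t} ( w(τ)² + v(τ)² ) − P·x(0)², where v(τ) = y(τ) − c·x(τ), equals −P·(ξ − x̂(t+1))² + l(t+1), where x̂ and l are defined by x̂(t+1) = â·x̂(t) + b·u(t) + ĝ·y(t), x̂(0) = 0, and l(t+1) = l(t) − P·x̂(t)² − γ²·y(t)² + (P·x̂(t) + γ²·c·y(t))²/(P + γ²c² − 1), l(0) = 0, with â = a·P/(P + γ²c² − 1) and ĝ = γ²·a·c/(P + γ²c² − 1). -/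
/-!
Past cost as a value function: the supremum is a finite-horizon dynamic program over the
state path, whose stage cost at time `τ` depends only on `x τ` and `x (τ + 1)` (the
disturbance being `w τ = x (τ + 1) - a x τ - b u τ`). Bellman's principle reduces the claim
to one maximisation per step, over the previous state `z`. That function of `z` is a concave
quadratic with leading coefficient `-(P + γ²c² - 1 + γ²a²)`, and the Riccati equation,
in the form `P (P + γ²c² - 1 + γ²a²) = γ² (P + γ²c² - 1)`, is exactly what makes its
maximum the next value `-P (ξ - x̂(s+1))² + l(s+1)`.
-/

open Finset

section Bellman

variable {α β : Type*} [AddCommMonoid β]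

def pathCost (h : α → β) (g : ℕ → α → α → β) (s : ℕ) (x : ℕ → α) : β :=
  h (x 0) + ∑ τ ∈ range s, g τ (x τ) (x (τ + 1))

theorem pathCost_succ (h : α → β) (g : ℕ → α → α → β) (s : ℕ) (x : ℕ → α) :
    pathCost h g (s + 1) x = pathCost h g s x + g s (x s) (x (s + 1)) := by
  rw [pathCost, pathCost, sum_range_succ, add_assoc]

theorem pathCost_congr (h : α → β) (g : ℕ → α → α → β) {s : ℕ} {x x' : ℕ → α}
    (hxx' : ∀ τ ≤ s, x τ = x' τ) : pathCost h g s x = pathCost h g s x' := by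
  unfold pathCost
  rw [hxx' 0 (Nat.zero_le s)]
  congr 1
  refine sum_congr rfl fun τ hτ => ?_
  rw [mem_range] at hτ
  rw [hxx' τ hτ.le, hxx' (τ + 1) hτ]

variable [PartialOrder β] [IsOrderedAddMonoid β]

theorem isGreatest_pathCost_of_bellman (h : α → β) (g : ℕ → α → α → β) (V : ℕ → α → β)
    (hV0 : V 0 = h)
    (hV : ∀ s ξ, IsGreatest (Set.range fun z => V s z + g s z ξ) (V (s + 1) ξ))
    (s : ℕ) (ξ : α) :
    IsGreatest (pathCost h g s '' {x | x s = ξ}) (V s ξ) := by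
  induction s generalizing ξ with
  | zero =>
    subst hV0
    refine ⟨⟨fun _ => ξ, rfl, by simp [pathCost]⟩, ?_⟩
    rintro _ ⟨x, hx : x 0 = ξ, rfl⟩
    simp [pathCost, hx]
  | succ s ih =>
    constructor
    · obtain ⟨z, hz⟩ := (hV s ξ).1
      obtain ⟨x, hxs, hx⟩ := (ih z).1
      refine ⟨Function.update x (s + 1) ξ, by simp, ?_⟩
      have hlocal : pathCost h g s (Function.update x (s + 1) ξ) = pathCost h g s x :=
        pathCost_congr h g fun τ hτ => Function.update_of_ne (by omega) _ _
      rw [pathCost_succ, hlocal, hx, Function.update_of_ne (by omega), hxs,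
        Function.update_self]
      exact hz
    · rintro _ ⟨x, hx : x (s + 1) = ξ, rfl⟩
      calc pathCost h g (s + 1) x = pathCost h g s x + g s (x s) ξ := by
            rw [pathCost_succ, hx]
        _ ≤ V s (x s) + g s (x s) ξ := add_le_add_left ((ih (x s)).2 ⟨x, rfl, rfl⟩) _
        _ ≤ V (s + 1) ξ := (hV s ξ).2 ⟨x s, rfl⟩

end Bellman

theorem isGreatest_range_sub_mul_sq {A : ℝ} (hA : 0 ≤ A) (M z₀ : ℝ) :
    IsGreatest (Set.range fun z => M - A * (z - z₀) ^ 2) M :=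
  ⟨⟨z₀, by simp⟩, by
    rintro _ ⟨z, rfl⟩
    nlinarith [mul_nonneg hA (sq_nonneg (z - z₀))]⟩

theorem riccati_mul_eq {a c γ P : ℝ} (hγ : γ ≠ 0) (hX : 0 < P + γ ^ 2 * c ^ 2 - 1)
    (hRic : P = (a ^ 2 / (P + γ ^ 2 * c ^ 2 - 1) + (γ ^ 2)⁻¹)⁻¹) :
    P * (P + γ ^ 2 * c ^ 2 - 1 + γ ^ 2 * a ^ 2) = γ ^ 2 * (P + γ ^ 2 * c ^ 2 - 1) := by
  have hpos : 0 < a ^ 2 / (P + γ ^ 2 * c ^ 2 - 1) + (γ ^ 2)⁻¹ := by positivity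
  have hinv : P * (a ^ 2 / (P + γ ^ 2 * c ^ 2 - 1) + (γ ^ 2)⁻¹) = 1 := by
    nth_rw 1 [hRic]
    exact inv_mul_cancel₀ hpos.ne'
  field_simp at hinv
  linear_combination hinv

theorem riccati_completeSquare (a b c γ P xh l u y ξ z : ℝ)
    (hX : P + γ ^ 2 * c ^ 2 - 1 ≠ 0) (hA : P + γ ^ 2 * c ^ 2 - 1 + γ ^ 2 * a ^ 2 ≠ 0)
    (hRic : P * (P + γ ^ 2 * c ^ 2 - 1 + γ ^ 2 * a ^ 2) = γ ^ 2 * (P + γ ^ 2 * c ^ 2 - 1)) :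
    -P * (z - xh) ^ 2 + l + (z ^ 2 - γ ^ 2 * ((ξ - a * z - b * u) ^ 2 + (y - c * z) ^ 2))
      = -P * (ξ - ((a * P / (P + γ ^ 2 * c ^ 2 - 1)) * xh + b * u
          + (γ ^ 2 * a * c / (P + γ ^ 2 * c ^ 2 - 1)) * y)) ^ 2
        + (l - P * xh ^ 2 - γ ^ 2 * y ^ 2 + (P * xh + γ ^ 2 * c * y) ^ 2 / (P + γ ^ 2 * c ^ 2 - 1))
        - (P + γ ^ 2 * c ^ 2 - 1 + γ ^ 2 * a ^ 2)
          * (z - (P * xh + γ ^ 2 * c * y + γ ^ 2 * a * (ξ - b * u))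
            / (P + γ ^ 2 * c ^ 2 - 1 + γ ^ 2 * a ^ 2)) ^ 2 := by
  field_simp
  linear_combination
    ((ξ - b * u) * (P + γ ^ 2 * c ^ 2 - 1) - a * (P * xh + γ ^ 2 * c * y)) ^ 2 * hRic

section Cost

variable (a b c γ P : ℝ) (u y : ℕ → ℝ)

def stageCost (s : ℕ) (z z' : ℝ) : ℝ :=
  z ^ 2 - γ ^ 2 * ((z' - a * z - b * u s) ^ 2 + (y s - c * z) ^ 2)

theorem pathCost_stageCost (n : ℕ) (x : ℕ → ℝ) :
    pathCost (fun z => -P * z ^ 2) (stageCost a b c γ u y) n x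
      = ∑ τ ∈ range n, x τ ^ 2 - γ ^ 2 * ∑ τ ∈ range n,
          ((x (τ + 1) - a * x τ - b * u τ) ^ 2 + (y τ - c * x τ) ^ 2) - P * x 0 ^ 2 := by
  simp only [pathCost, stageCost, sum_sub_distrib, mul_sum]
  ring

theorem setOf_cost_eq_image_pathCost (n : ℕ) (ξ : ℝ) :
    { S : ℝ | ∃ (w x : ℕ → ℝ), (∀ τ, x (τ + 1) = a * x τ + b * u τ + w τ) ∧ x n = ξ ∧
      S = ∑ τ ∈ range n, x τ ^ 2 - γ ^ 2 * ∑ τ ∈ range n, (w τ ^ 2 + (y τ - c * x τ) ^ 2)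
        - P * x 0 ^ 2 }
      = pathCost (fun z => -P * z ^ 2) (stageCost a b c γ u y) n '' {x | x n = ξ} := by
  ext S
  constructor
  · rintro ⟨w, x, hw, hxn, rfl⟩
    have hw' : ∀ τ, x (τ + 1) - a * x τ - b * u τ = w τ := fun τ => by rw [hw]; ring
    exact ⟨x, hxn, by simp only [pathCost_stageCost, hw']⟩
  · rintro ⟨x, hxn, rfl⟩
    exact ⟨fun τ => x (τ + 1) - a * x τ - b * u τ, x, fun τ => by ring, hxn,
      pathCost_stageCost a b c γ P u y n x⟩

end Cost

theorem past_cost_general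
    (a b c γ P : ℝ) (hγ : 0 < γ)
    (hX : 0 < P + γ ^ 2 * c ^ 2 - 1)
    (hRic : P = (a ^ 2 / (P + γ ^ 2 * c ^ 2 - 1) + (γ ^ 2)⁻¹)⁻¹)
    (u y : ℕ → ℝ) (t : ℕ) (ξ : ℝ)
    (xhat l : ℕ → ℝ)
    (hxhat0 : xhat 0 = 0) (hl0 : l 0 = 0)
    (hxhat : ∀ s, xhat (s + 1) =
      (a * P / (P + γ ^ 2 * c ^ 2 - 1)) * xhat s + b * u s
        + (γ ^ 2 * a * c / (P + γ ^ 2 * c ^ 2 - 1)) * y s)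
    (hl : ∀ s, l (s + 1) = l s - P * (xhat s) ^ 2 - γ ^ 2 * (y s) ^ 2
        + (P * xhat s + γ ^ 2 * c * y s) ^ 2 / (P + γ ^ 2 * c ^ 2 - 1)) :
    IsLUB { S : ℝ | ∃ (w x : ℕ → ℝ),
        (∀ τ, x (τ + 1) = a * x τ + b * u τ + w τ) ∧
        x (t + 1) = ξ ∧
        S = ∑ τ ∈ Finset.range (t + 1), (x τ) ^ 2
          - γ ^ 2 * ∑ τ ∈ Finset.range (t + 1), ((w τ) ^ 2 + (y τ - c * x τ) ^ 2)
          - P * (x 0) ^ 2 }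
      (-P * (ξ - xhat (t + 1)) ^ 2 + l (t + 1)) := by
  have hA : 0 < P + γ ^ 2 * c ^ 2 - 1 + γ ^ 2 * a ^ 2 := by positivity
  have hV : ∀ s ξ, IsGreatest
      (Set.range fun z => -P * (z - xhat s) ^ 2 + l s + stageCost a b c γ u y s z ξ)
      (-P * (ξ - xhat (s + 1)) ^ 2 + l (s + 1)) := fun s ξ => by
    simp only [stageCost, riccati_completeSquare a b c γ P _ _ _ _ ξ _ hX.ne' hA.ne'
      (riccati_mul_eq hγ.ne' hX hRic), hxhat, hl]
    exact isGreatest_range_sub_mul_sq hA.le _ _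
  rw [setOf_cost_eq_image_pathCost]
  refine (isGreatest_pathCost_of_bellman _ _ (fun s z => -P * (z - xhat s) ^ 2 + l s)
    ?_ hV (t + 1) ξ).isLUB
  funext z
  simp [hxhat0, hl0]

/-- **Past cost lemma** (Lemma 1).  For a fixed model `M = (a,b,c)`, gain level `γ > 0`
and positive Riccati solution `P`, the supremum over all disturbances `w` and initial
states `x 0` compatible with the past inputs/outputs and the next state `x (t+1) = ξ`
of the accumulated cost equals `-P (ξ - x̂(t+1))² + l(t+1)`, where `x̂` is the
`H∞`-observer and `l` the past cost. -/
theorem past_cost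
    (a b c γ P : ℝ) (hγ : 0 < γ) (hP : 0 < P)
    (hX : 0 < P + γ ^ 2 * c ^ 2 - 1)
    (hRic : P = (a ^ 2 / (P + γ ^ 2 * c ^ 2 - 1) + (γ ^ 2)⁻¹)⁻¹)
    (u y : ℕ → ℝ) (t : ℕ) (ξ : ℝ)
    (xhat l : ℕ → ℝ)
    (hxhat0 : xhat 0 = 0) (hl0 : l 0 = 0)
    (hxhat : ∀ s, xhat (s + 1) =
      (a * P / (P + γ ^ 2 * c ^ 2 - 1)) * xhat s + b * u s
        + (γ ^ 2 * a * c / (P + γ ^ 2 * c ^ 2 - 1)) * y s)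
    (hl : ∀ s, l (s + 1) = l s - P * (xhat s) ^ 2 - γ ^ 2 * (y s) ^ 2
        + (P * xhat s + γ ^ 2 * c * y s) ^ 2 / (P + γ ^ 2 * c ^ 2 - 1)) :
    IsLUB { S : ℝ | ∃ (w x : ℕ → ℝ),
        (∀ τ, x (τ + 1) = a * x τ + b * u τ + w τ) ∧
        x (t + 1) = ξ ∧
        S = ∑ τ ∈ Finset.range (t + 1), (x τ) ^ 2
          - γ ^ 2 * ∑ τ ∈ Finset.range (t + 1), ((w τ) ^ 2 + (y τ - c * x τ) ^ 2)
          - P * (x 0) ^ 2 }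
      (-P * (ξ - xhat (t + 1)) ^ 2 + l (t + 1)) :=
  past_cost_general a b c γ P hγ hX hRic u y t ξ xhat l hxhat0 hl0 hxhat hl
end

section
/- Let μ = (μ_t) be a causal output-feedback control policy, γ > 0, and 𝓜 ⊂ ℝ³ a finite set of models. Assume for all M = (a,b,c) ∈ 𝓜 the Riccati equation P_M = (a²/(P_M + γ²c² − 1) + γ⁻²)⁻¹ has a positive solution P_M with P_M + γ²c² − 1 > 0. For each M, given any real sequence y, define u(τ) = μ_τ(y(0),…,y(τ)), the observer x̂_M(t+1) = â_M·x̂_M(t) + b·u(t) + ĝ_M·y(t) with x̂_M(0) = 0, â_M = a·P_M/(P_M + γ²c² − 1), ĝ_M = γ²·a·c/(P_M + γ²c² − 1), and the past cost l_M(t+1) = l_M(t) − P_M·x̂_M(t)² − γ²·y(t)² + (P_M·x̂_M(t) + γ²·c·y(t))²/(P_M + γ²c² − 1), l_M(0) = 0. Then the closed-loop system is finite gain for every realization M ∈ 𝓜 if and only if l_M(t+1) ≤ 0 holds for every M ∈ 𝓜, every t ≥ 0 and every real sequence y(0),…,y(t). -/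
set_option maxHeartbeats 1000000

private lemma isc_ric (γ A C Q : ℝ) (hγ : 0 < γ) (hX : 0 < Q + γ^2*C^2 - 1)
    (h : Q = (A^2/(Q+γ^2*C^2-1) + (γ^2)⁻¹)⁻¹) :
    Q*(γ^2*A^2 + (Q+γ^2*C^2-1)) = γ^2*(Q+γ^2*C^2-1) := by
  have hγ2 : (0:ℝ) < γ^2 := by positivity
  have hd : 0 < A^2/(Q+γ^2*C^2-1) + (γ^2)⁻¹ := by
    have h1 := div_nonneg (sq_nonneg A) hX.le
    have h2 := inv_pos.mpr hγ2
    nlinarith [h1, h2]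
  have h1 : Q * (A^2/(Q+γ^2*C^2-1) + (γ^2)⁻¹) = 1 := by
    nth_rewrite 1 [h]; exact inv_mul_cancel₀ (ne_of_gt hd)
  have hXne : Q + γ^2*C^2 - 1 ≠ 0 := ne_of_gt hX
  have hγne : (γ:ℝ) ≠ 0 := ne_of_gt hγ
  field_simp at h1
  linear_combination h1

private lemma isc_master (γ A B C Q m u yv l x ξ m2 l2 xs : ℝ)
    (hXne : Q + γ^2*C^2 - 1 ≠ 0)
    (hDne : Q + γ^2*C^2 - 1 + γ^2*A^2 ≠ 0)
    (hRic : Q*(γ^2*A^2 + (Q+γ^2*C^2-1)) = γ^2*(Q+γ^2*C^2-1))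
    (hm : m2*(Q+γ^2*C^2-1) = A*Q*m + B*u*(Q+γ^2*C^2-1) + γ^2*A*C*yv)
    (hl : (l2 - l + Q*m^2 + γ^2*yv^2)*(Q+γ^2*C^2-1) = (Q*m+γ^2*C*yv)^2)
    (hxs : xs*((Q+γ^2*C^2-1)+γ^2*A^2) = Q*m + γ^2*A*(ξ-B*u) + γ^2*C*yv) :
    (l2 - Q*(ξ-m2)^2) - (l - Q*(x-m)^2 + x^2 - γ^2*(ξ-A*x-B*u)^2 - γ^2*(yv-C*x)^2)
      = ((Q+γ^2*C^2-1)+γ^2*A^2)*(x-xs)^2 := by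
  have hne : (Q+γ^2*C^2-1)^2*((Q+γ^2*C^2-1)+γ^2*A^2) ≠ 0 :=
    mul_ne_zero (pow_ne_zero 2 hXne) hDne
  refine mul_right_cancel₀ hne ?_
  linear_combination
      ((Q+γ^2*C^2-1)*((Q+γ^2*C^2-1)+γ^2*A^2)) * hl
    + (Q*((Q+γ^2*C^2-1)+γ^2*A^2)*((ξ-m2)*(Q+γ^2*C^2-1) + ξ*(Q+γ^2*C^2-1)
        - (A*Q*m + B*u*(Q+γ^2*C^2-1) + γ^2*A*C*yv))) * hm
    + ((Q+γ^2*C^2-1)^2*(2*x*((Q+γ^2*C^2-1)+γ^2*A^2)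
        - (Q*m + γ^2*A*(ξ-B*u) + γ^2*C*yv) - xs*((Q+γ^2*C^2-1)+γ^2*A^2))) * hxs
    + ((-1)*ξ^2 + (2)*Q*ξ^2 + (-1)*Q^2*ξ^2 + (2)*B*ξ*u + (-4)*B*Q*ξ*u + (2)*B*Q^2*ξ*u
      + (-1)*B^2*u^2 + (2)*B^2*Q*u^2 + (-1)*B^2*Q^2*u^2 + (-2)*A*Q*ξ*m + (2)*A*Q^2*ξ*m
      + (2)*A*B*Q*m*u + (-2)*A*B*Q^2*m*u + (-1)*A^2*Q^2*m^2 + (2)*γ^2*C^2*ξ^2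
      + (-2)*γ^2*C^2*Q*ξ^2 + (-4)*γ^2*B*C^2*ξ*u + (4)*γ^2*B*C^2*Q*ξ*u
      + (2)*γ^2*B^2*C^2*u^2 + (-2)*γ^2*B^2*C^2*Q*u^2 + (-2)*γ^2*A*C*ξ*yv
      + (2)*γ^2*A*C*Q*ξ*yv + (2)*γ^2*A*C^2*Q*ξ*m + (2)*γ^2*A*B*C*u*yv
      + (-2)*γ^2*A*B*C*Q*u*yv + (-2)*γ^2*A*B*C^2*Q*m*u + (-2)*γ^2*A^2*C*Q*m*yv
      + (-1)*γ^4*C^4*ξ^2 + (2)*γ^4*B*C^4*ξ*u + (-1)*γ^4*B^2*C^4*u^2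
      + (2)*γ^4*A*C^3*ξ*yv + (-2)*γ^4*A*B*C^3*u*yv + (-1)*γ^4*A^2*C^2*yv^2) * hRic

private lemma isc_final (γ C Q lc xh ξ : ℝ)
    (hX : 0 < Q + γ^2*C^2 - 1) (hP1 : 1 ≤ Q)
    (KB : ∀ z : ℝ, lc ≤ Q*xh^2 + γ^2*z^2 - (Q*xh + γ^2*C*z)^2/(Q+γ^2*C^2-1)) :
    lc + ξ^2 - Q*(ξ - xh)^2 ≤ 0 := by
  have hXne : Q + γ^2*C^2 - 1 ≠ 0 := ne_of_gt hX
  rcases eq_or_lt_of_le hP1 with h1 | h1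
  · have hKB := KB (C*ξ)
    have hq : ((Q*xh + γ^2*C*(C*ξ))^2/(Q+γ^2*C^2-1)) * (Q+γ^2*C^2-1)
        = (Q*xh+γ^2*C*(C*ξ))^2 := div_mul_cancel₀ _ hXne
    have hE : (Q*xh^2 + γ^2*(C*ξ)^2 - (Q*xh + γ^2*C*(C*ξ))^2/(Q+γ^2*C^2-1)
          + ξ^2 - Q*(ξ-xh)^2) * (Q+γ^2*C^2-1) = -xh^2 := by
      rw [← h1] at hq ⊢
      linear_combination -hq
    nlinarith [hKB, hE, hX, sq_nonneg xh]
  · have hS : 0 < Q - 1 := by linarith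
    have hz : (C*Q*xh/(Q-1))*(Q-1) = C*Q*xh := div_mul_cancel₀ _ (ne_of_gt hS)
    have hKB := KB (C*Q*xh/(Q-1))
    have hq : ((Q*xh + γ^2*C*(C*Q*xh/(Q-1)))^2/(Q+γ^2*C^2-1)) * (Q+γ^2*C^2-1)
        = (Q*xh+γ^2*C*(C*Q*xh/(Q-1)))^2 := div_mul_cancel₀ _ hXne
    have hE : (Q*xh^2 + γ^2*(C*Q*xh/(Q-1))^2
          - (Q*xh + γ^2*C*(C*Q*xh/(Q-1)))^2/(Q+γ^2*C^2-1)
          + ξ^2 - Q*(ξ-xh)^2) * ((Q+γ^2*C^2-1)*(Q-1)^2)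
        = -((Q+γ^2*C^2-1)*(Q-1)*((Q-1)*ξ - Q*xh)^2) := by
      linear_combination
        (γ^2*(C*Q*xh/(Q-1)) - 2*γ^2*Q*(C*Q*xh/(Q-1)) + γ^2*Q^2*(C*Q*xh/(Q-1))
         + γ^2*C*Q*xh - γ^2*C*Q^2*xh) * hz - (Q-1)^2*hq
    nlinarith [hKB, hE, hX, hS, sq_nonneg ((Q-1)*ξ - Q*xh),
      mul_pos hX (mul_pos hS hS),
      mul_nonneg (mul_nonneg hX.le hS.le) (sq_nonneg ((Q-1)*ξ - Q*xh))]

private noncomputable def iscSeq (γ A B C Q : ℝ) (u y : ℕ → ℝ) : ℕ → ℝ × ℝ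
  | 0 => (0, 0)
  | s+1 =>
      ((A*Q/(Q+γ^2*C^2-1)) * (iscSeq γ A B C Q u y s).1 + B * u s
         + (γ^2*A*C/(Q+γ^2*C^2-1)) * y s,
       (iscSeq γ A B C Q u y s).2 - Q*((iscSeq γ A B C Q u y s).1)^2 - γ^2*(y s)^2
         + (Q*(iscSeq γ A B C Q u y s).1 + γ^2*C*y s)^2/(Q+γ^2*C^2-1))

private noncomputable def iscBk (γ A B C Q D : ℝ) (xhat u y : ℕ → ℝ) (t : ℕ) : ℕ → ℝ
  | 0 => xhat (t+1)
  | k+1 => (Q * xhat (t-k) + γ^2*A*(iscBk γ A B C Q D xhat u y t k - B * u (t-k))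
            + γ^2*C*y (t-k)) / D



/-- **Information-state condition** (Theorem 1).  Given a causal output-feedback policy
`μ`, a gain level `γ > 0`, and a finite model set `𝓜 ⊂ ℝ³` such that for every
`M = (a,b,c) ∈ 𝓜` the Riccati equation has a positive solution `P M`, the closed loop
is finite gain for every realization `M ∈ 𝓜` if and only if the past costs `l_M(t+1)`
generated by the `H∞`-observers are nonpositive for every model, every time and every
measurement sequence.  Models are triples `M = (a, b, c)` with `a = M.1`, `b = M.2.1`,
`c = M.2.2`. -/
theorem information_state_condition
    (γ : ℝ) (hγ : 0 < γ)
    (𝓜 : Finset (ℝ × ℝ × ℝ))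
    (μ : ℕ → (ℕ → ℝ) → ℝ)
    (hcausal : ∀ t (y y' : ℕ → ℝ), (∀ s ≤ t, y s = y' s) → μ t y = μ t y')
    (P : ℝ × ℝ × ℝ → ℝ)
    (hPpos : ∀ M ∈ 𝓜, 0 < P M)
    (hXpos : ∀ M ∈ 𝓜, 0 < P M + γ ^ 2 * M.2.2 ^ 2 - 1)
    (hRic : ∀ M ∈ 𝓜,
      P M = (M.1 ^ 2 / (P M + γ ^ 2 * M.2.2 ^ 2 - 1) + (γ ^ 2)⁻¹)⁻¹) :
    -- finite gain for every realization M ∈ 𝓜 …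
    (∀ M ∈ 𝓜, ∀ x w v y : ℕ → ℝ,
        (∀ τ, x (τ + 1) = M.1 * x τ + M.2.1 * μ τ y + w τ) →
        (∀ τ, y τ = M.2.2 * x τ + v τ) →
        ∀ T : ℕ,
          ∑ τ ∈ Finset.range (T + 2), (x τ) ^ 2
            - γ ^ 2 * ∑ τ ∈ Finset.range (T + 1), (w τ) ^ 2
            - γ ^ 2 * ∑ τ ∈ Finset.range (T + 2), (v τ) ^ 2
            - P M * (x 0) ^ 2 ≤ 0)
    ↔
    -- … iff every past cost l_M(t+1) is nonpositive
    (∀ M ∈ 𝓜, ∀ y xhat l : ℕ → ℝ,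
        xhat 0 = 0 → l 0 = 0 →
        (∀ s, xhat (s + 1) =
          (M.1 * P M / (P M + γ ^ 2 * M.2.2 ^ 2 - 1)) * xhat s
            + M.2.1 * μ s y
            + (γ ^ 2 * M.1 * M.2.2 / (P M + γ ^ 2 * M.2.2 ^ 2 - 1)) * y s) →
        (∀ s, l (s + 1) = l s - P M * (xhat s) ^ 2 - γ ^ 2 * (y s) ^ 2
            + (P M * xhat s + γ ^ 2 * M.2.2 * y s) ^ 2
              / (P M + γ ^ 2 * M.2.2 ^ 2 - 1)) →
        ∀ t : ℕ, l (t + 1) ≤ 0) := by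
  have hγ2 : (0:ℝ) < γ^2 := by positivity
  constructor
  · -- finite gain ⇒ past costs nonpositive
    intro hFG M hM y xhat l hx0 hl0 hxrec hlrec t
    obtain ⟨A, B, C⟩ := M
    have hX := hXpos (A,B,C) hM
    have hRicM := hRic (A,B,C) hM
    have hXne : P (A,B,C) + γ^2*C^2 - 1 ≠ 0 := ne_of_gt hX
    have hD : 0 < P (A,B,C) + γ^2*C^2 - 1 + γ^2*A^2 := by nlinarith [sq_nonneg (γ*A)]
    have hDne : P (A,B,C) + γ^2*C^2 - 1 + γ^2*A^2 ≠ 0 := ne_of_gt hD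
    have hRicp := isc_ric γ A C (P (A,B,C)) hγ hX hRicM
    set x : ℕ → ℝ := fun s => iscBk γ A B C (P (A,B,C))
      (P (A,B,C) + γ^2*C^2 - 1 + γ^2*A^2) xhat (fun s => μ s y) y t (t+1-s) with hxdef
    set y' : ℕ → ℝ := fun s => if s ≤ t then y s else C * xhat (t+1) with hy'def
    set w : ℕ → ℝ := fun τ => x (τ+1) - A*x τ - B*(μ τ y') with hwdef
    set v : ℕ → ℝ := fun τ => y' τ - C*x τ with hvdef
    have hxtop : x (t+1) = xhat (t+1) := by
      simp only [hxdef, Nat.sub_self]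
      simp [iscBk]
    have hy'le : ∀ s, s ≤ t → y' s = y s := by
      intro s hs; simp only [hy'def]; rw [if_pos hs]
    have hu' : ∀ s, s ≤ t → μ s y' = μ s y := by
      intro s hs
      exact hcausal s y' y (fun r hr => hy'le r (hr.trans hs))
    have hxstep : ∀ s, s ≤ t → x s * (P (A,B,C) + γ^2*C^2 - 1 + γ^2*A^2)
        = P (A,B,C)*xhat s + γ^2*A*(x (s+1) - B*(μ s y)) + γ^2*C*y s := by
      intro s hs
      have h1 : t+1-s = (t-s)+1 := by omega
      have h2 : t - (t-s) = s := by omega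
      have h3 : t+1-(s+1) = t-s := by omega
      simp only [hxdef, h1, h3]
      simp only [iscBk]
      rw [h2, div_mul_cancel₀ _ hDne]
    have main : ∀ s, s ≤ t+1 → (∑ τ ∈ Finset.range (s+1), (x τ)^2)
        - γ^2*(∑ τ ∈ Finset.range s, (w τ)^2) - γ^2*(∑ τ ∈ Finset.range s, (v τ)^2)
        - P (A,B,C)*(x 0)^2 = l s + (x s)^2 - P (A,B,C)*(x s - xhat s)^2 := by
      intro s
      induction s with
      | zero =>
        intro _
        rw [(by norm_num : (0:ℕ)+1 = 1), Finset.sum_range_one, Finset.sum_range_zero,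
          hx0, hl0]
        ring
      | succ n ih =>
        intro hn1
        have hn : n ≤ t := by omega
        have ihh := ih (by omega)
        have hws : w n = x (n+1) - A*x n - B*(μ n y) := by
          simp only [hwdef]; rw [hu' n hn]
        have hvs : v n = y n - C*x n := by
          simp only [hvdef]; rw [hy'le n hn]
        have hm' : xhat (n+1) * (P (A,B,C) + γ^2*C^2-1)
            = A*(P (A,B,C))*xhat n + B*(μ n y)*(P (A,B,C)+γ^2*C^2-1) + γ^2*A*C*y n := by
          rw [hxrec n]; field_simp; try ring
        have hl' : (l (n+1) - l n + P (A,B,C)*(xhat n)^2 + γ^2*(y n)^2)*(P (A,B,C)+γ^2*C^2-1)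
            = (P (A,B,C)*xhat n + γ^2*C*y n)^2 := by
          rw [hlrec n]; field_simp; try ring
        have hmas := isc_master γ A B C (P (A,B,C)) (xhat n) (μ n y) (y n) (l n) (x n)
          (x (n+1)) (xhat (n+1)) (l (n+1)) (x n) hXne hDne hRicp hm' hl' (hxstep n hn)
        have e1 : ∑ τ ∈ Finset.range (n+1+1), (x τ)^2
            = (∑ τ ∈ Finset.range (n+1), (x τ)^2) + (x (n+1))^2 := Finset.sum_range_succ _ _
        have e2 : ∑ τ ∈ Finset.range (n+1), (w τ)^2
            = (∑ τ ∈ Finset.range n, (w τ)^2) + (w n)^2 := Finset.sum_range_succ _ _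
        have e3 : ∑ τ ∈ Finset.range (n+1), (v τ)^2
            = (∑ τ ∈ Finset.range n, (v τ)^2) + (v n)^2 := Finset.sum_range_succ _ _
        rw [e1, e2, e3, hws, hvs]
        linear_combination ihh - hmas
    have hdyn' : ∀ τ, x (τ+1) = A * x τ + B * μ τ y' + w τ := by
      intro τ; simp only [hwdef]; ring
    have hmeas' : ∀ τ, y' τ = C * x τ + v τ := by
      intro τ; simp only [hvdef]; ring
    have hG := hFG (A,B,C) hM x w v y' hdyn' hmeas' t
    have hvtop : v (t+1) = 0 := by
      simp only [hvdef, hy'def]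
      rw [if_neg (by omega), hxtop]
      ring
    have e4 : ∑ τ ∈ Finset.range (t+2), (v τ)^2
        = (∑ τ ∈ Finset.range (t+1), (v τ)^2) + (v (t+1))^2 := Finset.sum_range_succ _ _
    rw [e4, hvtop] at hG
    have hmm := main (t+1) le_rfl
    rw [hxtop, (by omega : t+1+1 = t+2)] at hmm
    nlinarith [hG, hmm, sq_nonneg (xhat (t+1))]
  · -- past costs nonpositive ⇒ finite gain
    intro hRHS M hM x w v y hdyn hmeas T
    obtain ⟨A, B, C⟩ := M
    have hX := hXpos (A,B,C) hM
    have hRicM := hRic (A,B,C) hM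
    have hXne : P (A,B,C) + γ^2*C^2 - 1 ≠ 0 := ne_of_gt hX
    have hD : 0 < P (A,B,C) + γ^2*C^2 - 1 + γ^2*A^2 := by nlinarith [sq_nonneg (γ*A)]
    have hDne : P (A,B,C) + γ^2*C^2 - 1 + γ^2*A^2 ≠ 0 := ne_of_gt hD
    have hRicp := isc_ric γ A C (P (A,B,C)) hγ hX hRicM
    set xh : ℕ → ℝ := fun n => (iscSeq γ A B C (P (A,B,C)) (fun s => μ s y) y n).1 with hxhdef
    set lc : ℕ → ℝ := fun n => (iscSeq γ A B C (P (A,B,C)) (fun s => μ s y) y n).2 with hlcdef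
    have hxh0 : xh 0 = 0 := by rw [hxhdef]; rfl
    have hlc0 : lc 0 = 0 := by rw [hlcdef]; rfl
    have hxhrec : ∀ s, xh (s+1) = (A*(P (A,B,C))/(P (A,B,C)+γ^2*C^2-1))*xh s
        + B*(μ s y) + (γ^2*A*C/(P (A,B,C)+γ^2*C^2-1))*y s := by
      intro s; simp only [hxhdef]; simp [iscSeq]
    have hlcrec : ∀ s, lc (s+1) = lc s - P (A,B,C)*(xh s)^2 - γ^2*(y s)^2
        + (P (A,B,C)*xh s + γ^2*C*y s)^2/(P (A,B,C)+γ^2*C^2-1) := by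
      intro s; simp only [hlcdef, hxhdef]; simp [iscSeq]
    -- P ≥ 1
    have hP1 : (1:ℝ) ≤ P (A,B,C) := by
      have h1 := hRHS (A,B,C) hM (fun _ => 1)
        (fun n => (iscSeq γ A B C (P (A,B,C)) (fun s => μ s (fun _ => 1)) (fun _ => 1) n).1)
        (fun n => (iscSeq γ A B C (P (A,B,C)) (fun s => μ s (fun _ => 1)) (fun _ => 1) n).2)
        rfl rfl (fun s => by simp [iscSeq]) (fun s => by simp [iscSeq]) 0
      have h2 : (iscSeq γ A B C (P (A,B,C)) (fun s => μ s (fun _ => 1)) (fun _ => 1) (0+1)).2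
          = 0 - P (A,B,C)*0^2 - γ^2*1^2
            + (P (A,B,C)*0 + γ^2*C*1)^2/(P (A,B,C)+γ^2*C^2-1) := by
        simp [iscSeq]
      rw [h2] at h1
      have h4 : (P (A,B,C)*0 + γ^2*C*1)^2/(P (A,B,C)+γ^2*C^2-1)*(P (A,B,C)+γ^2*C^2-1)
          = (P (A,B,C)*0 + γ^2*C*1)^2 := div_mul_cancel₀ _ hXne
      nlinarith [h1, h4, hX, hγ2]
    -- key bound from one adversarial future measurement
    have hKB : ∀ z : ℝ, lc (T+1) ≤ P (A,B,C)*(xh (T+1))^2 + γ^2*z^2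
        - (P (A,B,C)*xh (T+1) + γ^2*C*z)^2/(P (A,B,C)+γ^2*C^2-1) := by
      intro z
      set y2 : ℕ → ℝ := Function.update y (T+1) z with hy2def
      have hagree : ∀ s, s ≤ T+1 →
          iscSeq γ A B C (P (A,B,C)) (fun s => μ s y2) y2 s
            = iscSeq γ A B C (P (A,B,C)) (fun s => μ s y) y s := by
        intro s
        induction s with
        | zero => intro _; rfl
        | succ n ihn =>
          intro hn
          have hyn : y2 n = y n := by
            simp only [hy2def]
            rw [Function.update_of_ne (by omega : n ≠ T+1)]
          have hun : μ n y2 = μ n y := by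
            refine hcausal n y2 y (fun r hr => ?_)
            simp only [hy2def]
            rw [Function.update_of_ne (by omega : r ≠ T+1)]
          simp only [iscSeq]
          rw [ihn (by omega), hyn, hun]
      have h2 := hRHS (A,B,C) hM y2
        (fun n => (iscSeq γ A B C (P (A,B,C)) (fun s => μ s y2) y2 n).1)
        (fun n => (iscSeq γ A B C (P (A,B,C)) (fun s => μ s y2) y2 n).2)
        rfl rfl (fun s => by simp [iscSeq]) (fun s => by simp [iscSeq]) (T+1)
      have hy2T : y2 (T+1) = z := by
        simp only [hy2def]; rw [Function.update_self]
      have hlcrec2 : ∀ s, (iscSeq γ A B C (P (A,B,C)) (fun s => μ s y2) y2 (s+1)).2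
          = (iscSeq γ A B C (P (A,B,C)) (fun s => μ s y2) y2 s).2
            - P (A,B,C)*((iscSeq γ A B C (P (A,B,C)) (fun s => μ s y2) y2 s).1)^2
            - γ^2*(y2 s)^2
            + (P (A,B,C)*(iscSeq γ A B C (P (A,B,C)) (fun s => μ s y2) y2 s).1
                + γ^2*C*y2 s)^2/(P (A,B,C)+γ^2*C^2-1) := by
        intro s; simp [iscSeq]
      have h3 := hlcrec2 (T+1)
      rw [hagree (T+1) le_rfl, hy2T] at h3
      rw [h3] at h2
      simp only [hxhdef, hlcdef]
      linarith [h2]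
    -- the main induction
    have hws : ∀ s, w s = x (s+1) - A*x s - B*(μ s y) := by
      intro s; have := hdyn s; linarith
    have hvs : ∀ s, v s = y s - C*x s := by
      intro s; have := hmeas s; linarith
    have main : ∀ s, (∑ τ ∈ Finset.range (s+1), (x τ)^2)
        - γ^2*(∑ τ ∈ Finset.range s, (w τ)^2) - γ^2*(∑ τ ∈ Finset.range s, (v τ)^2)
        - P (A,B,C)*(x 0)^2 ≤ lc s + (x s)^2 - P (A,B,C)*(x s - xh s)^2 := by
      intro s
      induction s with
      | zero =>
        rw [(by norm_num : (0:ℕ)+1 = 1), Finset.sum_range_one, Finset.sum_range_zero,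
          hxh0, hlc0]
        exact le_of_eq (by ring)
      | succ n ih =>
        have hm' : xh (n+1) * (P (A,B,C) + γ^2*C^2-1)
            = A*(P (A,B,C))*xh n + B*(μ n y)*(P (A,B,C)+γ^2*C^2-1) + γ^2*A*C*y n := by
          rw [hxhrec n]; field_simp; try ring
        have hl' : (lc (n+1) - lc n + P (A,B,C)*(xh n)^2 + γ^2*(y n)^2)*(P (A,B,C)+γ^2*C^2-1)
            = (P (A,B,C)*xh n + γ^2*C*y n)^2 := by
          rw [hlcrec n]; field_simp; try ring
        have hxs : ((P (A,B,C)*xh n + γ^2*A*(x (n+1) - B*(μ n y)) + γ^2*C*y n)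
              /(P (A,B,C)+γ^2*C^2-1+γ^2*A^2)) * (P (A,B,C)+γ^2*C^2-1+γ^2*A^2)
            = P (A,B,C)*xh n + γ^2*A*(x (n+1) - B*(μ n y)) + γ^2*C*y n :=
          div_mul_cancel₀ _ hDne
        have hmas := isc_master γ A B C (P (A,B,C)) (xh n) (μ n y) (y n) (lc n) (x n)
          (x (n+1)) (xh (n+1)) (lc (n+1))
          ((P (A,B,C)*xh n + γ^2*A*(x (n+1) - B*(μ n y)) + γ^2*C*y n)
              /(P (A,B,C)+γ^2*C^2-1+γ^2*A^2))
          hXne hDne hRicp hm' hl' hxs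
        have e1 : ∑ τ ∈ Finset.range (n+1+1), (x τ)^2
            = (∑ τ ∈ Finset.range (n+1), (x τ)^2) + (x (n+1))^2 := Finset.sum_range_succ _ _
        have e2 : ∑ τ ∈ Finset.range (n+1), (w τ)^2
            = (∑ τ ∈ Finset.range n, (w τ)^2) + (w n)^2 := Finset.sum_range_succ _ _
        have e3 : ∑ τ ∈ Finset.range (n+1), (v τ)^2
            = (∑ τ ∈ Finset.range n, (v τ)^2) + (v n)^2 := Finset.sum_range_succ _ _
        have hsq : 0 ≤ (P (A,B,C)+γ^2*C^2-1+γ^2*A^2) * (x n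
            - (P (A,B,C)*xh n + γ^2*A*(x (n+1) - B*(μ n y)) + γ^2*C*y n)
              /(P (A,B,C)+γ^2*C^2-1+γ^2*A^2))^2 := mul_nonneg hD.le (sq_nonneg _)
        rw [e1, e2, e3, hws n, hvs n]
        linarith [ih, hmas, hsq]
    have hfin := isc_final γ C (P (A,B,C)) (lc (T+1)) (xh (T+1)) (x (T+1)) hX hP1 hKB
    have hmain := main (T+1)
    have e4 : ∑ τ ∈ Finset.range (T+2), (v τ)^2
        = (∑ τ ∈ Finset.range (T+1), (v τ)^2) + (v (T+1))^2 := Finset.sum_range_succ _ _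
    rw [e4]
    have e5 : (T+1+1) = T+2 := by omega
    rw [e5] at hmain
    nlinarith [hfin, hmain, mul_nonneg hγ2.le (sq_nonneg (v (T+1)))]
end

section
/- In the certainty-equivalence setup, define x̂(t+1) = â·x̂(t) + 2ĝ·y(t), x̂(0) = 0. Then for every t ≥ 0: (1) x̂₁(t) = 0 and x̂₋₁(t) = x̂(t) if l₁(t) ≥ l₋₁(t), while x̂₁(t) = x̂(t) and x̂₋₁(t) = 0 if l₁(t) < l₋₁(t); and (2) if l₁(t) ≥ l₋₁(t) then l₁(t+1) = l₁(t) − γ²y(t)² + (γ²y(t))²/(P + γ² − 1) and l₋₁(t+1) = l₋₁(t) − P·x̂(t)² − γ²y(t)² + (P·x̂(t) + γ²y(t))²/(P + γ² − 1), whereas if l₁(t) < l₋₁(t) the two update formulas are interchanged. -/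
/-- **Proposition 1.**  In the certainty-equivalence setup (`c = 1`, `b = ±1`, common
Riccati solution `P`, observers `x̂₁, x̂₋₁` with past costs `l₁, l₋₁`, and the
certainty-equivalence deadbeat controller), setting `x̂(t+1) = â x̂(t) + 2ĝ y(t)`,
`x̂(0) = 0`, one has for every `t`:
(1) `x̂₁(t) = 0`, `x̂₋₁(t) = x̂(t)` if `l₁(t) ≥ l₋₁(t)`, and `x̂₁(t) = x̂(t)`,
`x̂₋₁(t) = 0` if `l₁(t) < l₋₁(t)`; and
(2) the past-cost updates take the stated case forms. -/
theorem certainty_equivalence_observers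
    (a γ P : ℝ) (hγ : 0 < γ)
    (hP : P = (1 - γ ^ 2 * a ^ 2) / 2
        + Real.sqrt (γ ^ 2 * (γ ^ 2 - 1) + (γ ^ 2 * a ^ 2 - 1) ^ 2 / 4))
    (hX : 0 < P + γ ^ 2 - 1)
    (ahat ghat : ℝ)
    (hahat : ahat = a * P / (P + γ ^ 2 - 1))
    (hghat : ghat = γ ^ 2 * a / (P + γ ^ 2 - 1))
    (u y x1 xm1 l1 lm1 xhat : ℕ → ℝ)
    (hx10 : x1 0 = 0) (hxm10 : xm1 0 = 0) (hl10 : l1 0 = 0) (hlm10 : lm1 0 = 0)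
    (hxhat0 : xhat 0 = 0)
    -- observers for b = 1 and b = −1
    (hx1 : ∀ t, x1 (t + 1) = ahat * x1 t + 1 * u t + ghat * y t)
    (hxm1 : ∀ t, xm1 (t + 1) = ahat * xm1 t + (-1) * u t + ghat * y t)
    -- past costs
    (hl1 : ∀ t, l1 (t + 1) = l1 t - P * (x1 t) ^ 2 - γ ^ 2 * (y t) ^ 2
        + (P * x1 t + γ ^ 2 * y t) ^ 2 / (P + γ ^ 2 - 1))
    (hlm1 : ∀ t, lm1 (t + 1) = lm1 t - P * (xm1 t) ^ 2 - γ ^ 2 * (y t) ^ 2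
        + (P * xm1 t + γ ^ 2 * y t) ^ 2 / (P + γ ^ 2 - 1))
    -- certainty-equivalence deadbeat controller
    (hu : ∀ t, u t = if l1 (t + 1) ≥ lm1 (t + 1)
        then -(ahat * x1 t + ghat * y t)
        else ahat * xm1 t + ghat * y t)
    -- combined observer x̂
    (hxhat : ∀ t, xhat (t + 1) = ahat * xhat t + 2 * ghat * y t) :
    ∀ t : ℕ,
      ((l1 t ≥ lm1 t → x1 t = 0 ∧ xm1 t = xhat t) ∧
        (l1 t < lm1 t → x1 t = xhat t ∧ xm1 t = 0)) ∧
      ((l1 t ≥ lm1 t →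
          l1 (t + 1) = l1 t - γ ^ 2 * (y t) ^ 2
            + (γ ^ 2 * y t) ^ 2 / (P + γ ^ 2 - 1) ∧
          lm1 (t + 1) = lm1 t - P * (xhat t) ^ 2 - γ ^ 2 * (y t) ^ 2
            + (P * xhat t + γ ^ 2 * y t) ^ 2 / (P + γ ^ 2 - 1)) ∧
        (l1 t < lm1 t →
          l1 (t + 1) = l1 t - P * (xhat t) ^ 2 - γ ^ 2 * (y t) ^ 2
            + (P * xhat t + γ ^ 2 * y t) ^ 2 / (P + γ ^ 2 - 1) ∧
          lm1 (t + 1) = lm1 t - γ ^ 2 * (y t) ^ 2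
            + (γ ^ 2 * y t) ^ 2 / (P + γ ^ 2 - 1))) := by
  have key : ∀ t, (l1 t ≥ lm1 t → x1 t = 0 ∧ xm1 t = xhat t) ∧
      (l1 t < lm1 t → x1 t = xhat t ∧ xm1 t = 0) := by
    intro t
    induction t with
    | zero =>
      refine ⟨fun _ => ⟨hx10, by rw [hxm10, hxhat0]⟩, fun h => ?_⟩
      rw [hl10, hlm10] at h
      exact absurd h (lt_irrefl 0)
    | succ t ih =>
      have hsum : x1 t + xm1 t = xhat t := by
        rcases le_or_gt (lm1 t) (l1 t) with h | h
        · obtain ⟨h1, h2⟩ := ih.1 h; rw [h1, h2]; ring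
        · obtain ⟨h1, h2⟩ := ih.2 h; rw [h1, h2]; ring
      by_cases hc : l1 (t + 1) ≥ lm1 (t + 1)
      · have hu' : u t = -(ahat * x1 t + ghat * y t) := by rw [hu]; simp [hc]
        refine ⟨fun _ => ⟨?_, ?_⟩, fun h => absurd hc (not_le.mpr h)⟩
        · rw [hx1, hu']; ring
        · rw [hxm1, hu', hxhat, ← hsum]; ring
      · have hu' : u t = ahat * xm1 t + ghat * y t := by rw [hu]; simp [hc]
        refine ⟨fun h => absurd h hc, fun _ => ⟨?_, ?_⟩⟩
        · rw [hx1, hu', hxhat, ← hsum]; ring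
        · rw [hxm1, hu']; ring
  intro t
  refine ⟨key t, ?_, ?_⟩
  · intro h
    obtain ⟨h1, h2⟩ := (key t).1 h
    exact ⟨by rw [hl1, h1]; ring, by rw [hlm1, h2]⟩
  · intro h
    obtain ⟨h1, h2⟩ := (key t).2 h
    exact ⟨by rw [hl1, h1], by rw [hlm1, h2]; ring⟩
end

section
/- Let P > 1, γ > 0, x̂ ∈ ℝ, and l₁, l₋₁ ∈ ℝ with max(l₁, l₋₁) ≤ 0 and min(l₁, l₋₁) ≤ −(P/(P−1))·x̂². For any y ∈ ℝ define the updates: if l₁ ≥ l₋₁, then l₁⁺ = l₁ − γ²y² + (γ²y)²/(P + γ² − 1) and l₋₁⁺ = l₋₁ − P·x̂² − γ²y² + (P·x̂ + γ²y)²/(P + γ² − 1); if l₁ < l₋₁, then l₁⁺ = l₁ − P·x̂² − γ²y² + (P·x̂ + γ²y)²/(P + γ² − 1) and l₋₁⁺ = l₋₁ − γ²y² + (γ²y)²/(P + γ² − 1). Then l₁⁺ ≤ 0 and l₋₁⁺ ≤ 0. -/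
/-!
Both updates have the form `l - P x² - γ² y² + (P x + γ² y)² / (P + γ² - 1)`, the unshifted one
with `x = 0`. Splitting the denominator as `(P - 1) + γ²`, Sedrakyan's form of Cauchy–Schwarz bounds
the last term by `(P x)² / (P - 1) + γ² y² = P x² + γ² y² + P/(P-1) x²`, so the update is at most
`l + P/(P-1) x²`. For the shifted cost this is `≤ 0` by the hypothesis on the minimum; for the
unshifted one (`x = 0`) it is just `l ≤ 0`.
-/

theorem add_sq_div_add_le {R : Type*} [Semifield R] [LinearOrder R] [IsStrictOrderedRing R]
    [ExistsAddOfLE R] (u v : R) {a b : R} (ha : 0 < a) (hb : 0 < b) :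
    (u + v) ^ 2 / (a + b) ≤ u ^ 2 / a + v ^ 2 / b := by
  simpa [Fin.sum_univ_two] using
    Finset.sq_sum_div_le_sum_sq_div Finset.univ ![u, v] (g := ![a, b])
      (by simp [Fin.forall_fin_two, ha, hb])

theorem pastCost_update_nonpos {P γ x l : ℝ} (hP : 1 < P) (hγ : 0 < γ)
    (hl : l ≤ -(P / (P - 1)) * x ^ 2) (y : ℝ) :
    l - P * x ^ 2 - γ ^ 2 * y ^ 2 + (P * x + γ ^ 2 * y) ^ 2 / (P + γ ^ 2 - 1) ≤ 0 := by
  have hP1 : 0 < P - 1 := sub_pos.mpr hP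
  have hγ2 : 0 < γ ^ 2 := pow_pos hγ 2
  have cauchy_schwarz := add_sq_div_add_le (P * x) (γ ^ 2 * y) hP1 hγ2
  rw [sub_add_eq_add_sub] at cauchy_schwarz
  have hx : (P * x) ^ 2 / (P - 1) = P * x ^ 2 + P / (P - 1) * x ^ 2 := by
    field_simp
    ring
  have hy : (γ ^ 2 * y) ^ 2 / γ ^ 2 = γ ^ 2 * y ^ 2 := by
    field_simp
  linarith

/-- **Lemma 2 (one-step negativity propagation).**  Let `P > 1`, `γ > 0`, and let
`l₁, l₋₁ ≤ 0` with `min l₁ l₋₁ ≤ −(P/(P−1)) x̂²`.  Then for any measurement `y`, the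
updated past costs (per the deadbeat-controller case formulas) remain nonpositive. -/
theorem one_step_negativity
    (P γ xh l1 lm1 : ℝ) (hP : 1 < P) (hγ : 0 < γ)
    (hmax : max l1 lm1 ≤ 0)
    (hmin : min l1 lm1 ≤ -(P / (P - 1)) * xh ^ 2)
    (y : ℝ) :
    if l1 ≥ lm1 then
      (l1 - γ ^ 2 * y ^ 2 + (γ ^ 2 * y) ^ 2 / (P + γ ^ 2 - 1) ≤ 0 ∧
        lm1 - P * xh ^ 2 - γ ^ 2 * y ^ 2
          + (P * xh + γ ^ 2 * y) ^ 2 / (P + γ ^ 2 - 1) ≤ 0)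
    else
      (l1 - P * xh ^ 2 - γ ^ 2 * y ^ 2
          + (P * xh + γ ^ 2 * y) ^ 2 / (P + γ ^ 2 - 1) ≤ 0 ∧
        lm1 - γ ^ 2 * y ^ 2 + (γ ^ 2 * y) ^ 2 / (P + γ ^ 2 - 1) ≤ 0) := by
  have unshifted_nonpos {l : ℝ} (hl : l ≤ 0) :
      l - γ ^ 2 * y ^ 2 + (γ ^ 2 * y) ^ 2 / (P + γ ^ 2 - 1) ≤ 0 := by
    simpa using pastCost_update_nonpos (x := 0) hP hγ (by simpa using hl) y
  obtain ⟨hl1, hlm1⟩ := max_le_iff.mp hmax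
  split_ifs with h
  · rw [min_eq_right h] at hmin
    exact ⟨unshifted_nonpos hl1, pastCost_update_nonpos hP hγ hmin y⟩
  · rw [min_eq_left (le_of_not_ge h)] at hmin
    exact ⟨pastCost_update_nonpos hP hγ hmin y, unshifted_nonpos hlm1⟩
end

section
/- Let a ∈ ℝ and γ > 0, and assume P = (1 − γ²a²)/2 + sqrt(γ²(γ² − 1) + (γ²a² − 1)²/4) satisfies P > 1, the curvature condition P > 2γ − 1, and the strong negativity condition (P + 2γ² − 1)·(P − 1 − 2·sqrt(γ² − P))² ≥ (P − 1)·((P + 1)² − 4γ²). Then for both realizations b = 1 and b = −1, the closed-loop system x(t+1) = a·x(t) + b·u(t) + w(t), y(t) = x(t) + v(t), controlled with the certainty-equivalence deadbeat controller, has ℓ2-gain from (w, v) to x bounded above by γ: for every T ≥ 0, every w, v, and initial state x(0), Σ_{τ≤T+1} x(τ)² − γ² Σ_{τ≤T} w(τ)² − γ² Σ_{τ≤T+1} v(τ)² − P·x(0)² ≤ 0. -/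
set_option maxHeartbeats 4000000 in
/-- **Theorem 3 (Certainty equivalence, upper bound).**  Let `a ∈ ℝ`, `γ > 0`, and
assume the Riccati solution
`P = (1 − γ²a²)/2 + √(γ²(γ² − 1) + (γ²a² − 1)²/4)` satisfies `P > 1`, the curvature
condition `P > 2γ − 1`, and the strong negativity condition
`(P + 2γ² − 1)(P − 1 − 2√(γ² − P))² ≥ (P − 1)((P + 1)² − 4γ²)`.  Then for both
realizations `b = 1` and `b = −1` the closed loop
`x(t+1) = a x(t) + b u(t) + w(t)`, `y(t) = x(t) + v(t)` under the
certainty-equivalence deadbeat controller has `ℓ²`-gain from `(w, v)` to `x` bounded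
by `γ`: for all `T`, `Σ_{τ≤T+1} x² − γ² Σ_{τ≤T} w² − γ² Σ_{τ≤T+1} v² − P x(0)² ≤ 0`. -/
theorem certainty_equivalence_upper_bound
    (a γ P : ℝ) (hγ : 0 < γ)
    (hP : P = (1 - γ ^ 2 * a ^ 2) / 2
        + Real.sqrt (γ ^ 2 * (γ ^ 2 - 1) + (γ ^ 2 * a ^ 2 - 1) ^ 2 / 4))
    (hP1 : 1 < P)
    (hcurv : 2 * γ - 1 < P)
    (hneg : (P + 2 * γ ^ 2 - 1) * (P - 1 - 2 * Real.sqrt (γ ^ 2 - P)) ^ 2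
        ≥ (P - 1) * ((P + 1) ^ 2 - 4 * γ ^ 2))
    (ahat ghat : ℝ)
    (hahat : ahat = a * P / (P + γ ^ 2 - 1))
    (hghat : ghat = γ ^ 2 * a / (P + γ ^ 2 - 1))
    (b : ℝ) (hb : b = 1 ∨ b = -1)
    (x w v u y x1 xm1 l1 lm1 : ℕ → ℝ)
    -- observers for b = 1 and b = −1 and their past costs
    (hx10 : x1 0 = 0) (hxm10 : xm1 0 = 0) (hl10 : l1 0 = 0) (hlm10 : lm1 0 = 0)
    (hx1 : ∀ t, x1 (t + 1) = ahat * x1 t + 1 * u t + ghat * y t)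
    (hxm1 : ∀ t, xm1 (t + 1) = ahat * xm1 t + (-1) * u t + ghat * y t)
    (hl1 : ∀ t, l1 (t + 1) = l1 t - P * (x1 t) ^ 2 - γ ^ 2 * (y t) ^ 2
        + (P * x1 t + γ ^ 2 * y t) ^ 2 / (P + γ ^ 2 - 1))
    (hlm1 : ∀ t, lm1 (t + 1) = lm1 t - P * (xm1 t) ^ 2 - γ ^ 2 * (y t) ^ 2
        + (P * xm1 t + γ ^ 2 * y t) ^ 2 / (P + γ ^ 2 - 1))
    -- certainty-equivalence deadbeat controller
    (hu : ∀ t, u t = if l1 (t + 1) ≥ lm1 (t + 1)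
        then -(ahat * x1 t + ghat * y t)
        else ahat * xm1 t + ghat * y t)
    -- closed-loop dynamics with realization b and measurements y = x + v
    (hdyn : ∀ τ, x (τ + 1) = a * x τ + b * u τ + w τ)
    (hy : ∀ τ, y τ = x τ + v τ) :
    ∀ T : ℕ,
      ∑ τ ∈ Finset.range (T + 2), (x τ) ^ 2
        - γ ^ 2 * ∑ τ ∈ Finset.range (T + 1), (w τ) ^ 2
        - γ ^ 2 * ∑ τ ∈ Finset.range (T + 2), (v τ) ^ 2
        - P * (x 0) ^ 2 ≤ 0 := by
  have hP0 : (0:ℝ) < P := by linarith only [hP1]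
  have hd : (0:ℝ) < P - 1 := by linarith only [hP1]
  have hg2 : (0:ℝ) < γ^2 := pow_pos hγ 2
  have hQ : (0:ℝ) < P + γ^2 - 1 := by linarith only [hP1, hg2]
  have hQne : P + γ^2 - 1 ≠ 0 := ne_of_gt hQ
  have hrad : 0 ≤ γ ^ 2 * (γ ^ 2 - 1) + (γ ^ 2 * a ^ 2 - 1) ^ 2 / 4 := by
    by_contra hcon
    push_neg at hcon
    have h0 : Real.sqrt (γ ^ 2 * (γ ^ 2 - 1) + (γ ^ 2 * a ^ 2 - 1) ^ 2 / 4) = 0 :=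
      Real.sqrt_eq_zero_of_nonpos (le_of_lt hcon)
    rw [h0] at hP
    nlinarith only [sq_nonneg (γ*a), hP, hP1]
  have hsq : (P - (1 - γ ^ 2 * a ^ 2) / 2)^2
      = γ ^ 2 * (γ ^ 2 - 1) + (γ ^ 2 * a ^ 2 - 1) ^ 2 / 4 := by
    have hv : Real.sqrt (γ ^ 2 * (γ ^ 2 - 1) + (γ ^ 2 * a ^ 2 - 1) ^ 2 / 4)
        = P - (1 - γ ^ 2 * a ^ 2) / 2 := by linarith only [hP]
    rw [← hv]
    exact Real.sq_sqrt hrad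
  have hPa : P*(γ^2*a^2) = (γ^2 - P)*(P + γ^2 - 1) := by linear_combination hsq
  have hGP : P ≤ γ^2 := by
    by_contra hcon
    push_neg at hcon
    nlinarith only [hPa, mul_nonneg (mul_nonneg hP0.le hg2.le) (sq_nonneg a), hQ, hcon]
  set σ := Real.sqrt (γ ^ 2 - P) with hσdef
  have hσ0 : 0 ≤ σ := Real.sqrt_nonneg _
  have hσ2 : σ^2 = γ^2 - P := Real.sq_sqrt (by linarith only [hGP])
  have hcurv' : 0 < P + 1 - 2*γ := by linarith only [hcurv]
  have hppg : 0 < P + 1 + 2*γ := by linarith only [hP1, hγ]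
  have h4g : 4*γ^2 < (P+1)^2 := by nlinarith only [mul_pos hcurv' hppg]
  have h2s : 0 < 2*σ + (P - 1) := by linarith only [hσ0, hd]
  have hd2σ : 2*σ < P - 1 := by nlinarith only [h4g, hσ2, h2s, hd, hσ0]
  have ht0 : 0 < P - 1 - 2*σ := by linarith only [hd2σ]
  have hsig : 0 ≤ γ^2*(P-1) - 2*(P + γ^2 - 1)*σ := by
    have hid : (P + 2 * γ ^ 2 - 1) * (P - 1 - 2 * σ) ^ 2 - (P - 1) * ((P + 1) ^ 2 - 4 * γ ^ 2)
        = 2*(P - 1 - 2*σ)*(γ^2*(P-1) - 2*(P + γ^2 - 1)*σ) := by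
      linear_combination (-4*P + 4)*hσ2
    have h2tG : 0 ≤ 2*(P - 1 - 2*σ)*(γ^2*(P-1) - 2*(P + γ^2 - 1)*σ) := by
      linarith only [hneg, hid]
    by_contra hcon
    push_neg at hcon
    nlinarith only [h2tG, mul_pos ht0 (by linarith only [hcon] : 0 < 2*(P + γ^2 - 1)*σ - γ^2*(P-1))]
  have hN2 : 2*(P-1)^2*σ ≤ (γ^2*(P-1)^2 - 4*(P + γ^2 - 1)*σ^2) := by
    nlinarith only [mul_nonneg hσ0 hsig, mul_nonneg hd.le hsig]
  have hN0 : 0 ≤ (γ^2*(P-1)^2 - 4*(P + γ^2 - 1)*σ^2) := by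
    nlinarith only [hN2, mul_nonneg (sq_nonneg (P-1)) hσ0]
  have h2N : 0 ≤ 2*γ^2*(P-1)^2 - (γ^2*(P-1)^2 - 4*(P + γ^2 - 1)*σ^2) := by
    nlinarith only [mul_nonneg hQ.le (sq_nonneg σ), mul_nonneg hg2.le (sq_nonneg (P-1))]
  have hq4 : 0 < (P-1)^2 - 4*σ^2 := by nlinarith only [hd2σ, h2s]
  have key : ∀ C TT SQ DD : ℝ, C*TT + SQ^2 + DD = 0 → 0 < C → 0 ≤ DD → TT ≤ 0 := by
    intro C TT SQ DD h hC hD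
    nlinarith only [h, hC, hD, sq_nonneg SQ]
  have keyE : ∀ C X1 X2 D : ℝ, C*(X2 - X1) = D → 0 ≤ D → 0 < C → X1 ≤ X2 := by
    intro C X1 X2 D h hD hC
    nlinarith only [h, hD, hC]
  have habs : ∀ NN M2 L b1 b2 W : ℝ, 0 ≤ NN → 0 ≤ M2 - NN → 0 < M2 →
      NN*b1 + (M2 - NN)*b2 + M2*W ≤ 0 → L ≤ b1 → L ≤ b2 → L + W ≤ 0 := by
    intro NN M2 L b1 b2 W h1 h2 h3 h4 h5 h6
    nlinarith only [mul_le_mul_of_nonneg_left h5 h1, mul_le_mul_of_nonneg_left h6 h2, h3, h4]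
  have hΔ : ∀ X Y : ℝ, (-(P*X^2) - γ^2*Y^2 + (P*X + γ^2*Y)^2/(P + γ^2 - 1)) * (P + γ^2 - 1)
      = (-(P*X^2) - γ^2*Y^2)*(P + γ^2 - 1) + (P*X + γ^2*Y)^2 := by
    intro X Y
    field_simp
  have lemA : ∀ X Y : ℝ, (P-1)*(-(P*X^2) - γ^2*Y^2 + (P*X + γ^2*Y)^2/(P + γ^2 - 1)) ≤ P*X^2 := by
    intro X Y
    nlinarith only [hΔ X Y, hQ, hd, sq_nonneg (γ*((P-1)*Y - P*X))]
  have hcore : ∀ r Y L S Dr D0 : ℝ,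
      (P + γ^2 - 1)*S = a*P*r + 2*(γ^2*a)*Y →
      Dr*(P + γ^2 - 1) = (-(P*r^2) - γ^2*Y^2)*(P + γ^2 - 1) + (P*r + γ^2*Y)^2 →
      D0*(P + γ^2 - 1) = (-(P*(0:ℝ)^2) - γ^2*Y^2)*(P + γ^2 - 1) + (P*0 + γ^2*Y)^2 →
      L ≤ -(P*r^2) + (P-1)*Dr → L ≤ (P-1)*D0 → L + P*S^2 ≤ 0 := by
    intro r Y L S Dr D0 hS hDr hD0 H1 H2
    have hfin2 : ((8*(P + γ^2 - 1)*γ^4*(P-1)^2*((P-1)^2 - 4*σ^2))*(P + γ^2 - 1)^2)*((γ^2*(P-1)^2 - 4*(P + γ^2 - 1)*σ^2)*(-(P*r^2) + (P-1)*Dr) + (2*γ^2*(P-1)^2 - (γ^2*(P-1)^2 - 4*(P + γ^2 - 1)*σ^2))*((P-1)*D0) + 2*γ^2*(P-1)^2*(P*S^2)) + (2*(-2*(P + γ^2 - 1)*γ^4*(P-1)^2*((P-1)^2 - 4*σ^2))*Y + 2*(P + γ^2 - 1)*P*γ^2*(P-1)*((γ^2*(P-1)^2 - 4*(P + γ^2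 - 1)*σ^2) + 4*(P-1)*σ^2)*r)^2
        + (4*P^2*γ^4*(P-1)^2*(P + γ^2 - 1)^2)*((γ^2*(P-1)^2 - 4*(P + γ^2 - 1)*σ^2) - 2*(P-1)^2*σ)*((γ^2*(P-1)^2 - 4*(P + γ^2 - 1)*σ^2) + 2*(P-1)^2*σ)*r^2 = 0 := by
      linear_combination ((16*P^9*γ^6*a*r + 16*P^9*γ^6*S + 16*P^8*γ^8*a*r + 32*P^8*γ^8*a*Y + 32*P^8*γ^8*S - 112*P^8*γ^6*a*r - 128*P^8*γ^6*S + 32*P^7*γ^10*a*Y + 16*P^7*γ^10*S - 96*P^7*γ^8*a*r - 224*P^7*γ^8*a*Y - 224*P^7*γ^8*S - 64*P^7*γ^6*σ^2*a*r - 64*P^7*γ^6*σ^2*S + 336*P^7*γ^6*a*r + 448*P^7*γ^6*S - 192*P^6*γ^10*a*Y - 96*P^6*γ^10*S - 64*P^6*γ^8*σ^2*a*r - 128*P^6*γ^8*σ^2*a*Y - 128*P^6*γ^8*σ^2*S + 240*P^6*γ^8*a*r + 672*P^6*γ^8*a*Y + 672*P^6*γ^8*S + 320*P^6*γ^6*σ^2*a*r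 + 384*P^6*γ^6*σ^2*S - 560*P^6*γ^6*a*r - 896*P^6*γ^6*S - 128*P^5*γ^10*σ^2*a*Y - 64*P^5*γ^10*σ^2*S + 480*P^5*γ^10*a*Y + 240*P^5*γ^10*S + 256*P^5*γ^8*σ^2*a*r + 640*P^5*γ^8*σ^2*a*Y + 640*P^5*γ^8*σ^2*S - 320*P^5*γ^8*a*r - 1120*P^5*γ^8*a*Y - 1120*P^5*γ^8*S - 640*P^5*γ^6*σ^2*a*r - 960*P^5*γ^6*σ^2*S + 560*P^5*γ^6*a*r + 1120*P^5*γ^6*S + 512*P^4*γ^10*σ^2*a*Y + 256*P^4*γ^10*σ^2*S - 640*P^4*γ^10*a*Y - 320*P^4*γ^10*S - 384*P^4*γ^8*σ^2*a*r - 1280*P^4*γ^8*σ^2*a*Y - 1280*P^4*γ^8*σ^2*S + 240*P^4*γ^8*a*r + 1120*P^4*γ^8*a*Y + 1120*P^4*γ^8*S + 640*P^4*γ^6*σ^2*a*r + 1280*P^4*γ^6*σ^2*S - 336*P^4*γ^6*a*r - 896*P^4*γ^6*S - 768*P^3*γ^10*σ^2*a*Y - 384*P^3*γ^10*σ^2*S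 + 480*P^3*γ^10*a*Y + 240*P^3*γ^10*S + 256*P^3*γ^8*σ^2*a*r + 1280*P^3*γ^8*σ^2*a*Y + 1280*P^3*γ^8*σ^2*S - 96*P^3*γ^8*a*r - 672*P^3*γ^8*a*Y - 672*P^3*γ^8*S - 320*P^3*γ^6*σ^2*a*r - 960*P^3*γ^6*σ^2*S + 112*P^3*γ^6*a*r + 448*P^3*γ^6*S + 512*P^2*γ^10*σ^2*a*Y + 256*P^2*γ^10*σ^2*S - 192*P^2*γ^10*a*Y - 96*P^2*γ^10*S - 64*P^2*γ^8*σ^2*a*r - 640*P^2*γ^8*σ^2*a*Y - 640*P^2*γ^8*σ^2*S + 16*P^2*γ^8*a*r + 224*P^2*γ^8*a*Y + 224*P^2*γ^8*S + 64*P^2*γ^6*σ^2*a*r + 384*P^2*γ^6*σ^2*S - 16*P^2*γ^6*a*r - 128*P^2*γ^6*S - 128*P*γ^10*σ^2*a*Y - 64*P*γ^10*σ^2*S + 32*P*γ^10*a*Y + 16*P*γ^10*S + 128*P*γ^8*σ^2*a*Y + 128*P*γ^8*σ^2*S - 32*P*γ^8*a*Y - 32*P*γ^8*S - 64*P*γ^6*σ^2*S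 + 16*P*γ^6*S))*hS + ((8*P^9*γ^6 + 16*P^8*γ^8 - 72*P^8*γ^6 - 32*P^8*γ^4*σ^2 + 8*P^7*γ^10 - 128*P^7*γ^8 - 128*P^7*γ^6*σ^2 + 288*P^7*γ^6 + 256*P^7*γ^4*σ^2 - 56*P^6*γ^10 - 160*P^6*γ^8*σ^2 + 448*P^6*γ^8 + 896*P^6*γ^6*σ^2 - 672*P^6*γ^6 + 128*P^6*γ^4*σ^4 - 896*P^6*γ^4*σ^2 - 64*P^5*γ^10*σ^2 + 168*P^5*γ^10 + 960*P^5*γ^8*σ^2 - 896*P^5*γ^8 + 384*P^5*γ^6*σ^4 - 2688*P^5*γ^6*σ^2 + 1008*P^5*γ^6 - 768*P^5*γ^4*σ^4 + 1792*P^5*γ^4*σ^2 + 320*P^4*γ^10*σ^2 - 280*P^4*γ^10 + 384*P^4*γ^8*σ^4 - 2400*P^4*γ^8*σ^2 + 1120*P^4*γ^8 - 1920*P^4*γ^6*σ^4 + 4480*P^4*γ^6*σ^2 - 1008*P^4*γ^6 + 1920*P^4*γ^4*σ^4 - 2240*P^4*γ^4*σ^2 + 128*P^3*γ^10*σ^4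 - 640*P^3*γ^10*σ^2 + 280*P^3*γ^10 - 1536*P^3*γ^8*σ^4 + 3200*P^3*γ^8*σ^2 - 896*P^3*γ^8 + 3840*P^3*γ^6*σ^4 - 4480*P^3*γ^6*σ^2 + 672*P^3*γ^6 - 2560*P^3*γ^4*σ^4 + 1792*P^3*γ^4*σ^2 - 384*P^2*γ^10*σ^4 + 640*P^2*γ^10*σ^2 - 168*P^2*γ^10 + 2304*P^2*γ^8*σ^4 - 2400*P^2*γ^8*σ^2 + 448*P^2*γ^8 - 3840*P^2*γ^6*σ^4 + 2688*P^2*γ^6*σ^2 - 288*P^2*γ^6 + 1920*P^2*γ^4*σ^4 - 896*P^2*γ^4*σ^2 + 384*P*γ^10*σ^4 - 320*P*γ^10*σ^2 + 56*P*γ^10 - 1536*P*γ^8*σ^4 + 960*P*γ^8*σ^2 - 128*P*γ^8 + 1920*P*γ^6*σ^4 - 896*P*γ^6*σ^2 + 72*P*γ^6 - 768*P*γ^4*σ^4 + 256*P*γ^4*σ^2 - 128*γ^10*σ^4 + 64*γ^10*σ^2 - 8*γ^10 + 384*γ^8*σ^4 - 160*γ^8*σ^2 + 16*γ^8 - 384*γ^6*σ^4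 + 128*γ^6*σ^2 - 8*γ^6 + 128*γ^4*σ^4 - 32*γ^4*σ^2))*hDr + ((8*P^9*γ^6 + 16*P^8*γ^8 - 72*P^8*γ^6 + 32*P^8*γ^4*σ^2 + 8*P^7*γ^10 - 128*P^7*γ^8 + 64*P^7*γ^6*σ^2 + 288*P^7*γ^6 - 256*P^7*γ^4*σ^2 - 56*P^6*γ^10 + 32*P^6*γ^8*σ^2 + 448*P^6*γ^8 - 448*P^6*γ^6*σ^2 - 672*P^6*γ^6 - 128*P^6*γ^4*σ^4 + 896*P^6*γ^4*σ^2 + 168*P^5*γ^10 - 192*P^5*γ^8*σ^2 - 896*P^5*γ^8 - 384*P^5*γ^6*σ^4 + 1344*P^5*γ^6*σ^2 + 1008*P^5*γ^6 + 768*P^5*γ^4*σ^4 - 1792*P^5*γ^4*σ^2 - 280*P^4*γ^10 - 384*P^4*γ^8*σ^4 + 480*P^4*γ^8*σ^2 + 1120*P^4*γ^8 + 1920*P^4*γ^6*σ^4 - 2240*P^4*γ^6*σ^2 - 1008*P^4*γ^6 - 1920*P^4*γ^4*σ^4 + 2240*P^4*γ^4*σ^2 - 128*P^3*γ^10*σ^4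 + 280*P^3*γ^10 + 1536*P^3*γ^8*σ^4 - 640*P^3*γ^8*σ^2 - 896*P^3*γ^8 - 3840*P^3*γ^6*σ^4 + 2240*P^3*γ^6*σ^2 + 672*P^3*γ^6 + 2560*P^3*γ^4*σ^4 - 1792*P^3*γ^4*σ^2 + 384*P^2*γ^10*σ^4 - 168*P^2*γ^10 - 2304*P^2*γ^8*σ^4 + 480*P^2*γ^8*σ^2 + 448*P^2*γ^8 + 3840*P^2*γ^6*σ^4 - 1344*P^2*γ^6*σ^2 - 288*P^2*γ^6 - 1920*P^2*γ^4*σ^4 + 896*P^2*γ^4*σ^2 - 384*P*γ^10*σ^4 + 56*P*γ^10 + 1536*P*γ^8*σ^4 - 192*P*γ^8*σ^2 - 128*P*γ^8 - 1920*P*γ^6*σ^4 + 448*P*γ^6*σ^2 + 72*P*γ^6 + 768*P*γ^4*σ^4 - 256*P*γ^4*σ^2 + 128*γ^10*σ^4 - 8*γ^10 - 384*γ^8*σ^4 + 32*γ^8*σ^2 + 16*γ^8 + 384*γ^6*σ^4 - 64*γ^6*σ^2 - 8*γ^6 - 128*γ^4*σ^4 + 32*γ^4*σ^2))*hD0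
        + ((16*P^9*γ^4*r^2 + 16*P^8*γ^6*r^2 + 64*P^8*γ^6*r*Y - 112*P^8*γ^4*r^2 + 64*P^7*γ^8*r*Y + 64*P^7*γ^8*Y^2 - 96*P^7*γ^6*r^2 - 448*P^7*γ^6*r*Y - 64*P^7*γ^4*σ^2*r^2 + 336*P^7*γ^4*r^2 + 64*P^6*γ^10*Y^2 - 384*P^6*γ^8*r*Y - 448*P^6*γ^8*Y^2 - 64*P^6*γ^6*σ^2*r^2 - 256*P^6*γ^6*σ^2*r*Y + 240*P^6*γ^6*r^2 + 1344*P^6*γ^6*r*Y + 320*P^6*γ^4*σ^2*r^2 - 560*P^6*γ^4*r^2 - 384*P^5*γ^10*Y^2 - 256*P^5*γ^8*σ^2*r*Y - 256*P^5*γ^8*σ^2*Y^2 + 960*P^5*γ^8*r*Y + 1344*P^5*γ^8*Y^2 + 256*P^5*γ^6*σ^2*r^2 + 1280*P^5*γ^6*σ^2*r*Y - 320*P^5*γ^6*r^2 - 2240*P^5*γ^6*r*Y - 640*P^5*γ^4*σ^2*r^2 + 560*P^5*γ^4*r^2 - 256*P^4*γ^10*σ^2*Y^2 + 960*P^4*γ^10*Y^2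 + 1024*P^4*γ^8*σ^2*r*Y + 1280*P^4*γ^8*σ^2*Y^2 - 1280*P^4*γ^8*r*Y - 2240*P^4*γ^8*Y^2 - 384*P^4*γ^6*σ^2*r^2 - 2560*P^4*γ^6*σ^2*r*Y + 240*P^4*γ^6*r^2 + 2240*P^4*γ^6*r*Y + 640*P^4*γ^4*σ^2*r^2 - 336*P^4*γ^4*r^2 + 1024*P^3*γ^10*σ^2*Y^2 - 1280*P^3*γ^10*Y^2 - 1536*P^3*γ^8*σ^2*r*Y - 2560*P^3*γ^8*σ^2*Y^2 + 960*P^3*γ^8*r*Y + 2240*P^3*γ^8*Y^2 + 256*P^3*γ^6*σ^2*r^2 + 2560*P^3*γ^6*σ^2*r*Y - 96*P^3*γ^6*r^2 - 1344*P^3*γ^6*r*Y - 320*P^3*γ^4*σ^2*r^2 + 112*P^3*γ^4*r^2 - 1536*P^2*γ^10*σ^2*Y^2 + 960*P^2*γ^10*Y^2 + 1024*P^2*γ^8*σ^2*r*Y + 2560*P^2*γ^8*σ^2*Y^2 - 384*P^2*γ^8*r*Y - 1344*P^2*γ^8*Y^2 - 64*P^2*γ^6*σ^2*r^2 - 1280*P^2*γ^6*σ^2*r*Y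 + 16*P^2*γ^6*r^2 + 448*P^2*γ^6*r*Y + 64*P^2*γ^4*σ^2*r^2 - 16*P^2*γ^4*r^2 + 1024*P*γ^10*σ^2*Y^2 - 384*P*γ^10*Y^2 - 256*P*γ^8*σ^2*r*Y - 1280*P*γ^8*σ^2*Y^2 + 64*P*γ^8*r*Y + 448*P*γ^8*Y^2 + 256*P*γ^6*σ^2*r*Y - 64*P*γ^6*r*Y - 256*γ^10*σ^2*Y^2 + 64*γ^10*Y^2 + 256*γ^8*σ^2*Y^2 - 64*γ^8*Y^2))*hPa + ((- 16*P^10*γ^4*r^2 - 32*P^9*γ^6*r^2 - 64*P^9*γ^6*r*Y + 128*P^9*γ^4*r^2 - 16*P^8*γ^8*r^2 - 128*P^8*γ^8*r*Y - 64*P^8*γ^8*Y^2 + 224*P^8*γ^6*r^2 + 512*P^8*γ^6*r*Y + 64*P^8*γ^4*σ^2*r^2 - 448*P^8*γ^4*r^2 - 64*P^7*γ^10*r*Y - 128*P^7*γ^10*Y^2 + 96*P^7*γ^8*r^2 + 896*P^7*γ^8*r*Y + 512*P^7*γ^8*Y^2 + 128*P^7*γ^6*σ^2*r^2 + 256*P^7*γ^6*σ^2*r*Y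 - 672*P^7*γ^6*r^2 - 1792*P^7*γ^6*r*Y - 384*P^7*γ^4*σ^2*r^2 + 896*P^7*γ^4*r^2 - 64*P^6*γ^12*Y^2 + 384*P^6*γ^10*r*Y + 896*P^6*γ^10*Y^2 + 64*P^6*γ^8*σ^2*r^2 + 512*P^6*γ^8*σ^2*r*Y + 256*P^6*γ^8*σ^2*Y^2 - 240*P^6*γ^8*r^2 - 2688*P^6*γ^8*r*Y - 1792*P^6*γ^8*Y^2 - 640*P^6*γ^6*σ^2*r^2 - 1536*P^6*γ^6*σ^2*r*Y + 1120*P^6*γ^6*r^2 + 3584*P^6*γ^6*r*Y + 960*P^6*γ^4*σ^2*r^2 - 1120*P^6*γ^4*r^2 + 384*P^5*γ^12*Y^2 + 256*P^5*γ^10*σ^2*r*Y + 512*P^5*γ^10*σ^2*Y^2 - 960*P^5*γ^10*r*Y - 2688*P^5*γ^10*Y^2 - 256*P^5*γ^8*σ^2*r^2 - 2560*P^5*γ^8*σ^2*r*Y - 1536*P^5*γ^8*σ^2*Y^2 + 320*P^5*γ^8*r^2 + 4480*P^5*γ^8*r*Y + 3584*P^5*γ^8*Y^2 + 1280*P^5*γ^6*σ^2*r^2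 + 3840*P^5*γ^6*σ^2*r*Y - 1120*P^5*γ^6*r^2 - 4480*P^5*γ^6*r*Y - 1280*P^5*γ^4*σ^2*r^2 + 896*P^5*γ^4*r^2 + 256*P^4*γ^12*σ^2*Y^2 - 960*P^4*γ^12*Y^2 - 1024*P^4*γ^10*σ^2*r*Y - 2560*P^4*γ^10*σ^2*Y^2 + 1280*P^4*γ^10*r*Y + 4480*P^4*γ^10*Y^2 + 384*P^4*γ^8*σ^2*r^2 + 5120*P^4*γ^8*σ^2*r*Y + 3840*P^4*γ^8*σ^2*Y^2 - 240*P^4*γ^8*r^2 - 4480*P^4*γ^8*r*Y - 4480*P^4*γ^8*Y^2 - 1280*P^4*γ^6*σ^2*r^2 - 5120*P^4*γ^6*σ^2*r*Y + 672*P^4*γ^6*r^2 + 3584*P^4*γ^6*r*Y + 960*P^4*γ^4*σ^2*r^2 - 448*P^4*γ^4*r^2 - 1024*P^3*γ^12*σ^2*Y^2 + 1280*P^3*γ^12*Y^2 + 1536*P^3*γ^10*σ^2*r*Y + 5120*P^3*γ^10*σ^2*Y^2 - 960*P^3*γ^10*r*Y - 4480*P^3*γ^10*Y^2 - 256*P^3*γ^8*σ^2*r^2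 - 5120*P^3*γ^8*σ^2*r*Y - 5120*P^3*γ^8*σ^2*Y^2 + 96*P^3*γ^8*r^2 + 2688*P^3*γ^8*r*Y + 3584*P^3*γ^8*Y^2 + 640*P^3*γ^6*σ^2*r^2 + 3840*P^3*γ^6*σ^2*r*Y - 224*P^3*γ^6*r^2 - 1792*P^3*γ^6*r*Y - 384*P^3*γ^4*σ^2*r^2 + 128*P^3*γ^4*r^2 + 1536*P^2*γ^12*σ^2*Y^2 - 960*P^2*γ^12*Y^2 - 1024*P^2*γ^10*σ^2*r*Y - 5120*P^2*γ^10*σ^2*Y^2 + 384*P^2*γ^10*r*Y + 2688*P^2*γ^10*Y^2 + 64*P^2*γ^8*σ^2*r^2 + 2560*P^2*γ^8*σ^2*r*Y + 3840*P^2*γ^8*σ^2*Y^2 - 16*P^2*γ^8*r^2 - 896*P^2*γ^8*r*Y - 1792*P^2*γ^8*Y^2 - 128*P^2*γ^6*σ^2*r^2 - 1536*P^2*γ^6*σ^2*r*Y + 32*P^2*γ^6*r^2 + 512*P^2*γ^6*r*Y + 64*P^2*γ^4*σ^2*r^2 - 16*P^2*γ^4*r^2 - 1024*P*γ^12*σ^2*Y^2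 + 384*P*γ^12*Y^2 + 256*P*γ^10*σ^2*r*Y + 2560*P*γ^10*σ^2*Y^2 - 64*P*γ^10*r*Y - 896*P*γ^10*Y^2 - 512*P*γ^8*σ^2*r*Y - 1536*P*γ^8*σ^2*Y^2 + 128*P*γ^8*r*Y + 512*P*γ^8*Y^2 + 256*P*γ^6*σ^2*r*Y - 64*P*γ^6*r*Y + 256*γ^12*σ^2*Y^2 - 64*γ^12*Y^2 - 512*γ^10*σ^2*Y^2 + 128*γ^10*Y^2 + 256*γ^8*σ^2*Y^2 - 64*γ^8*Y^2))*hσ2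
    have hC4Q2 : 0 < (8*(P + γ^2 - 1)*γ^4*(P-1)^2*((P-1)^2 - 4*σ^2))*(P + γ^2 - 1)^2 := by
      nlinarith only [mul_pos (mul_pos (mul_pos (mul_pos hQ (pow_pos hγ 4)) (pow_pos hd 2)) hq4) (pow_pos hQ 2)]
    have f1 : 0 ≤ (γ^2*(P-1)^2 - 4*(P + γ^2 - 1)*σ^2) - 2*(P-1)^2*σ := by linarith only [hN2]
    have f2 : 0 ≤ (γ^2*(P-1)^2 - 4*(P + γ^2 - 1)*σ^2) + 2*(P-1)^2*σ := by
      nlinarith only [hN0, mul_nonneg (sq_nonneg (P-1)) hσ0]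
    have hA0 : 0 ≤ (4*P^2*γ^4*(P-1)^2*(P + γ^2 - 1)^2) := by positivity
    have hDD : 0 ≤ (4*P^2*γ^4*(P-1)^2*(P + γ^2 - 1)^2)*((γ^2*(P-1)^2 - 4*(P + γ^2 - 1)*σ^2) - 2*(P-1)^2*σ)*((γ^2*(P-1)^2 - 4*(P + γ^2 - 1)*σ^2) + 2*(P-1)^2*σ)*r^2 :=
      mul_nonneg (mul_nonneg (mul_nonneg hA0 f1) f2) (sq_nonneg r)
    have hTGT := key ((8*(P + γ^2 - 1)*γ^4*(P-1)^2*((P-1)^2 - 4*σ^2))*(P + γ^2 - 1)^2) ((γ^2*(P-1)^2 - 4*(P + γ^2 - 1)*σ^2)*(-(P*r^2) + (P-1)*Dr) + (2*γ^2*(P-1)^2 - (γ^2*(P-1)^2 - 4*(P + γ^2 - 1)*σ^2))*((P-1)*D0) + 2*γ^2*(P-1)^2*(P*S^2)) (2*(-2*(P + γ^2 - 1)*γ^4*(P-1)^2*((P-1)^2 - 4*σ^2))*Y + 2*(P + γ^2 - 1)*P*γ^2*(P-1)*((γ^2*(P-1)^2 - 4*(P + γ^2 - 1)*σ^2) + 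4*(P-1)*σ^2)*r)
      ((4*P^2*γ^4*(P-1)^2*(P + γ^2 - 1)^2)*((γ^2*(P-1)^2 - 4*(P + γ^2 - 1)*σ^2) - 2*(P-1)^2*σ)*((γ^2*(P-1)^2 - 4*(P + γ^2 - 1)*σ^2) + 2*(P-1)^2*σ)*r^2) hfin2 hC4Q2 hDD
    have hpos : 0 < 2*γ^2*(P-1)^2 := by nlinarith only [mul_pos hg2 (pow_pos hd 2)]
    exact habs (γ^2*(P-1)^2 - 4*(P + γ^2 - 1)*σ^2) (2*γ^2*(P-1)^2) L (-(P*r^2) + (P-1)*Dr) ((P-1)*D0) (P*S^2) hN0 h2N hpos hTGT H1 H2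
  have lemE : ∀ z ww B X Y Z DX : ℝ,
      (P + γ^2 - 1)*Z = a*P*X + γ^2*a*Y + (P + γ^2 - 1)*B →
      DX*(P + γ^2 - 1) = (-(P*X^2) - γ^2*Y^2)*(P + γ^2 - 1) + (P*X + γ^2*Y)^2 →
      z^2 - γ^2*ww^2 - γ^2*(Y - z)^2 - P*(z - X)^2 + P*(a*z + B + ww - Z)^2 ≤ DX := by
    intro z ww B X Y Z DX hZ hDX
    have hfinE : (γ^2*(P + γ^2 - 1)^2)*(DX - (z^2 - γ^2*ww^2 - γ^2*(Y - z)^2 - P*(z - X)^2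
          + P*(a*z + B + ww - Z)^2))
        = P*(P + γ^2 - 1)*((P + γ^2 - 1)*z - P*X - γ^2*Y - γ^2*a*ww)^2 := by
      linear_combination ((2*P^2*γ^2*a*z - P^2*γ^2*a*X + 2*P^2*γ^2*ww + P^2*γ^2*B - P^2*γ^2*Z + 2*P*γ^4*a*z - P*γ^4*a*Y + 2*P*γ^4*ww + P*γ^4*B - P*γ^4*Z - 2*P*γ^2*a*z - 2*P*γ^2*ww - P*γ^2*B + P*γ^2*Z))*hZ + ((P*γ^2 + γ^4 - γ^2))*hDX + ((- P^2*z^2 + 2*P^2*z*X - P^2*X^2 - 2*P*γ^2*z^2 + 2*P*γ^2*z*X + 2*P*γ^2*z*Y - P*γ^2*ww^2 - 2*P*γ^2*X*Y + 2*P*z^2 - 2*P*z*X - γ^4*z^2 + 2*γ^4*z*Y - γ^4*ww^2 - γ^4*Y^2 + 2*γ^2*z^2 - 2*γ^2*z*Y + γ^2*ww^2 - z^2))*hPa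
    exact keyE (γ^2*(P + γ^2 - 1)^2) _ _ _ hfinE
      (mul_nonneg (mul_nonneg hP0.le hQ.le) (sq_nonneg ((P + γ^2 - 1)*z - P*X - γ^2*Y - γ^2*a*ww)))
      (mul_pos hg2 (pow_pos hQ 2))
  have inv : ∀ t : ℕ, ((P-1)*l1 t + P*(x1 t)^2 ≤ 0) ∧ ((P-1)*lm1 t + P*(xm1 t)^2 ≤ 0)
      ∧ (x1 t = 0 ∨ xm1 t = 0) := by
    intro t
    induction t with
    | zero =>
      refine ⟨?_, ?_, Or.inl hx10⟩
      · rw [hl10, hx10]; norm_num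
      · rw [hlm10, hxm10]; norm_num
    | succ t ih =>
      obtain ⟨ih1, ih2, ih3⟩ := ih
      by_cases hcs : l1 (t + 1) ≥ lm1 (t + 1)
      · have hut : u t = -(ahat * x1 t + ghat * y t) := by rw [hu t, if_pos hcs]
        have hx1n : x1 (t + 1) = 0 := by rw [hx1 t, hut]; ring
        have hSn : (P + γ^2 - 1)*(xm1 (t + 1)) = a*P*(x1 t + xm1 t) + 2*(γ^2*a)*(y t) := by
          rw [hxm1 t, hut, hahat, hghat]
          field_simp
          ring
        have part1 : (P-1)*l1 (t + 1) + P*(x1 (t + 1))^2 ≤ 0 := by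
          rw [hx1n, hl1 t]
          nlinarith only [lemA (x1 t) (y t), ih1]
        have part2 : (P-1)*lm1 (t + 1) + P*(xm1 (t + 1))^2 ≤ 0 := by
          have hDr := hΔ (x1 t + xm1 t) (y t)
          have hD0 := hΔ 0 (y t)
          rcases ih3 with hz | hz
          · have H1 : (P-1)*lm1 (t + 1) ≤ -(P*(x1 t + xm1 t)^2)
                + (P-1)*(-(P*(x1 t + xm1 t)^2) - γ^2*(y t)^2
                  + (P*(x1 t + xm1 t) + γ^2*(y t))^2/(P + γ^2 - 1)) := by
              rw [hlm1 t, hz, zero_add]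
              nlinarith only [ih2]
            have H2 : (P-1)*lm1 (t + 1) ≤ (P-1)*(-(P*(0:ℝ)^2) - γ^2*(y t)^2
                + (P*0 + γ^2*(y t))^2/(P + γ^2 - 1)) := by
              have hm := mul_le_mul_of_nonneg_left hcs hd.le
              rw [hl1 t, hz] at hm
              rw [hz] at ih1
              nlinarith only [hm, ih1]
            exact hcore (x1 t + xm1 t) (y t) ((P-1)*lm1 (t + 1)) (xm1 (t + 1)) _ _ hSn hDr hD0 H1 H2
          · have H1 : (P-1)*lm1 (t + 1) ≤ -(P*(x1 t + xm1 t)^2)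
                + (P-1)*(-(P*(x1 t + xm1 t)^2) - γ^2*(y t)^2
                  + (P*(x1 t + xm1 t) + γ^2*(y t))^2/(P + γ^2 - 1)) := by
              have hm := mul_le_mul_of_nonneg_left hcs hd.le
              rw [hl1 t] at hm
              rw [hz, add_zero]
              nlinarith only [hm, ih1]
            have H2 : (P-1)*lm1 (t + 1) ≤ (P-1)*(-(P*(0:ℝ)^2) - γ^2*(y t)^2
                + (P*0 + γ^2*(y t))^2/(P + γ^2 - 1)) := by
              rw [hlm1 t, hz]
              rw [hz] at ih2
              nlinarith only [ih2]
            exact hcore (x1 t + xm1 t) (y t) ((P-1)*lm1 (t + 1)) (xm1 (t + 1)) _ _ hSn hDr hD0 H1 H2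
        exact ⟨part1, part2, Or.inl hx1n⟩
      · have hlt : l1 (t + 1) ≤ lm1 (t + 1) := le_of_lt (lt_of_not_ge hcs)
        have hut : u t = ahat * xm1 t + ghat * y t := by rw [hu t, if_neg hcs]
        have hxm1n : xm1 (t + 1) = 0 := by rw [hxm1 t, hut]; ring
        have hSn : (P + γ^2 - 1)*(x1 (t + 1)) = a*P*(x1 t + xm1 t) + 2*(γ^2*a)*(y t) := by
          rw [hx1 t, hut, hahat, hghat]
          field_simp
          ring
        have part2 : (P-1)*lm1 (t + 1) + P*(xm1 (t + 1))^2 ≤ 0 := by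
          rw [hxm1n, hlm1 t]
          nlinarith only [lemA (xm1 t) (y t), ih2]
        have part1 : (P-1)*l1 (t + 1) + P*(x1 (t + 1))^2 ≤ 0 := by
          have hDr := hΔ (x1 t + xm1 t) (y t)
          have hD0 := hΔ 0 (y t)
          rcases ih3 with hz | hz
          · have H1 : (P-1)*l1 (t + 1) ≤ -(P*(x1 t + xm1 t)^2)
                + (P-1)*(-(P*(x1 t + xm1 t)^2) - γ^2*(y t)^2
                  + (P*(x1 t + xm1 t) + γ^2*(y t))^2/(P + γ^2 - 1)) := by
              have hm := mul_le_mul_of_nonneg_left hlt hd.le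
              rw [hlm1 t] at hm
              rw [hz, zero_add]
              nlinarith only [hm, ih2]
            have H2 : (P-1)*l1 (t + 1) ≤ (P-1)*(-(P*(0:ℝ)^2) - γ^2*(y t)^2
                + (P*0 + γ^2*(y t))^2/(P + γ^2 - 1)) := by
              rw [hl1 t, hz]
              rw [hz] at ih1
              nlinarith only [ih1]
            exact hcore (x1 t + xm1 t) (y t) ((P-1)*l1 (t + 1)) (x1 (t + 1)) _ _ hSn hDr hD0 H1 H2
          · have H1 : (P-1)*l1 (t + 1) ≤ -(P*(x1 t + xm1 t)^2)
                + (P-1)*(-(P*(x1 t + xm1 t)^2) - γ^2*(y t)^2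
                  + (P*(x1 t + xm1 t) + γ^2*(y t))^2/(P + γ^2 - 1)) := by
              rw [hl1 t]
              rw [hz, add_zero]
              nlinarith only [ih1]
            have H2 : (P-1)*l1 (t + 1) ≤ (P-1)*(-(P*(0:ℝ)^2) - γ^2*(y t)^2
                + (P*0 + γ^2*(y t))^2/(P + γ^2 - 1)) := by
              have hm := mul_le_mul_of_nonneg_left hlt hd.le
              rw [hlm1 t, hz] at hm
              rw [hz] at ih2
              nlinarith only [hm, ih2]
            exact hcore (x1 t + xm1 t) (y t) ((P-1)*l1 (t + 1)) (x1 (t + 1)) _ _ hSn hDr hD0 H1 H2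
        exact ⟨part1, part2, Or.inr hxm1n⟩
  intro T
  rcases hb with hb1 | hb1
  · have star : ∀ t : ℕ, (∑ τ ∈ Finset.range t, ((x τ)^2 - γ^2*(w τ)^2 - γ^2*(v τ)^2))
        - P*(x 0)^2 ≤ l1 t - P*(x t - x1 t)^2 := by
      intro t
      induction t with
      | zero =>
        rw [Finset.sum_range_zero, hl10, hx10]
        nlinarith only []
      | succ t ih =>
        have hZ : (P + γ^2 - 1)*(x1 (t + 1)) = a*P*(x1 t) + γ^2*a*(y t) + (P + γ^2 - 1)*(b*u t) := by
          rw [hx1 t, hahat, hghat, hb1]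
          field_simp
          ring
        have hE := lemE (x t) (w t) (b*u t) (x1 t) (y t) (x1 (t + 1)) _ hZ (hΔ (x1 t) (y t))
        have hxt : x (t + 1) = a*x t + b*u t + w t := hdyn t
        have hvt : v t = y t - x t := by linarith only [hy t]
        rw [Finset.sum_range_succ, hl1 t, hxt, hvt]
        nlinarith only [ih, hE]
    have hstar := star (T + 1)
    have hinv := (inv (T + 1)).1
    have hEf : l1 (T + 1) - P*(x (T + 1) - x1 (T + 1))^2 + (x (T + 1))^2 - γ^2*(v (T + 1))^2 ≤ 0 := by
      nlinarith only [hinv, hd, sq_nonneg ((P-1)*(x (T + 1)) - P*(x1 (T + 1))),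
        mul_nonneg hg2.le (sq_nonneg (v (T + 1)))]
    have hsplit : ∑ τ ∈ Finset.range (T + 1), ((x τ)^2 - γ^2*(w τ)^2 - γ^2*(v τ)^2)
        = (∑ τ ∈ Finset.range (T + 1), (x τ)^2) - γ^2*(∑ τ ∈ Finset.range (T + 1), (w τ)^2)
          - γ^2*(∑ τ ∈ Finset.range (T + 1), (v τ)^2) := by
      rw [Finset.sum_sub_distrib, Finset.sum_sub_distrib, ← Finset.mul_sum, ← Finset.mul_sum]
    rw [show T + 2 = (T + 1) + 1 from rfl,
      Finset.sum_range_succ (fun τ => (x τ)^2) (T + 1),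
      Finset.sum_range_succ (fun τ => (v τ)^2) (T + 1)]
    nlinarith only [hstar, hEf, hsplit]
  · have star : ∀ t : ℕ, (∑ τ ∈ Finset.range t, ((x τ)^2 - γ^2*(w τ)^2 - γ^2*(v τ)^2))
        - P*(x 0)^2 ≤ lm1 t - P*(x t - xm1 t)^2 := by
      intro t
      induction t with
      | zero =>
        rw [Finset.sum_range_zero, hlm10, hxm10]
        nlinarith only []
      | succ t ih =>
        have hZ : (P + γ^2 - 1)*(xm1 (t + 1)) = a*P*(xm1 t) + γ^2*a*(y t) + (P + γ^2 - 1)*(b*u t) := by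
          rw [hxm1 t, hahat, hghat, hb1]
          field_simp
          ring
        have hE := lemE (x t) (w t) (b*u t) (xm1 t) (y t) (xm1 (t + 1)) _ hZ (hΔ (xm1 t) (y t))
        have hxt : x (t + 1) = a*x t + b*u t + w t := hdyn t
        have hvt : v t = y t - x t := by linarith only [hy t]
        rw [Finset.sum_range_succ, hlm1 t, hxt, hvt]
        nlinarith only [ih, hE]
    have hstar := star (T + 1)
    have hinv := (inv (T + 1)).2.1
    have hEf : lm1 (T + 1) - P*(x (T + 1) - xm1 (T + 1))^2 + (x (T + 1))^2 - γ^2*(v (T + 1))^2 ≤ 0 := by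
      nlinarith only [hinv, hd, sq_nonneg ((P-1)*(x (T + 1)) - P*(xm1 (T + 1))),
        mul_nonneg hg2.le (sq_nonneg (v (T + 1)))]
    have hsplit : ∑ τ ∈ Finset.range (T + 1), ((x τ)^2 - γ^2*(w τ)^2 - γ^2*(v τ)^2)
        = (∑ τ ∈ Finset.range (T + 1), (x τ)^2) - γ^2*(∑ τ ∈ Finset.range (T + 1), (w τ)^2)
          - γ^2*(∑ τ ∈ Finset.range (T + 1), (v τ)^2) := by
      rw [Finset.sum_sub_distrib, Finset.sum_sub_distrib, ← Finset.mul_sum, ← Finset.mul_sum]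
    rw [show T + 2 = (T + 1) + 1 from rfl,
      Finset.sum_range_succ (fun τ => (x τ)^2) (T + 1),
      Finset.sum_range_succ (fun τ => (v τ)^2) (T + 1)]
    nlinarith only [hstar, hEf, hsplit]
end

section
/- Let a ∈ ℝ and γ > 0 with γ²(γ² − 1) + (γ²a² − 1)²/4 ≥ 0, and define P = (1 − γ²a²)/2 + sqrt(γ²(γ² − 1) + (γ²a² − 1)²/4). If P > 0 and P + γ² − 1 > 0, then P solves the Riccati equation P = (a²/(P + γ² − 1) + γ⁻²)⁻¹. -/
/-- The explicit formula `P = (1 − γ²a²)/2 + √(γ²(γ² − 1) + (γ²a² − 1)²/4)` gives a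
solution of the Riccati equation `P = (a²/(P + γ² − 1) + γ⁻²)⁻¹`, provided the
discriminant is nonnegative, `P > 0` and `P + γ² − 1 > 0`. -/
theorem riccati_explicit_solution
    (a γ : ℝ) (hγ : 0 < γ)
    (hdisc : 0 ≤ γ ^ 2 * (γ ^ 2 - 1) + (γ ^ 2 * a ^ 2 - 1) ^ 2 / 4)
    (P : ℝ)
    (hP : P = (1 - γ ^ 2 * a ^ 2) / 2
        + Real.sqrt (γ ^ 2 * (γ ^ 2 - 1) + (γ ^ 2 * a ^ 2 - 1) ^ 2 / 4))
    (hPpos : 0 < P) (hX : 0 < P + γ ^ 2 - 1) :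
    P = (a ^ 2 / (P + γ ^ 2 - 1) + (γ ^ 2)⁻¹)⁻¹ := by
  have hs := Real.sq_sqrt hdisc
  have hquad : P ^ 2 + P * (γ ^ 2 * a ^ 2 - 1) - γ ^ 2 * (γ ^ 2 - 1) = 0 := by
    subst hP; nlinarith [hs]
  have hγ2 : (0:ℝ) < γ ^ 2 := by positivity
  have hden : 0 < a ^ 2 / (P + γ ^ 2 - 1) + (γ ^ 2)⁻¹ := by positivity
  rw [eq_comm, inv_eq_iff_eq_inv]
  field_simp
  nlinarith [hquad, hX, hγ2]
end

section
/- Let a ∈ ℝ, γ > 0, P > 1, X = P + γ² − 1 and ĝ = γ²·a/X, and assume a²/X = 1/P − 1/γ² (i.e. P solves the Riccati equation P = (a²/X + γ⁻²)⁻¹). Then γ⁴·(1/X − 1/γ²) ≤ −4·(P/(P−1))·ĝ² if and only if (P + 1)² ≥ 4γ², which (since P > 1 > −1 and γ > 0) holds if and only if P ≥ 2γ − 1. -/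
/-!
Substituting `X = P + γ² − 1` and the Riccati relation, both sides of the curvature inequality
become negative multiples of the same positive factor `c = γ² / ((P − 1) X)`: the left side is
`−c (P − 1)²` and the right side is `−c · 4 (γ² − P)`. Cancelling `−c` leaves
`4 (γ² − P) ≤ (P − 1)²`, i.e. `4γ² ≤ (P + 1)²`, and since `P + 1` and `2γ` are positive this
is `2γ ≤ P + 1`.
-/

lemma sq_gain_of_riccati {a γ P X ghat : ℝ} (hγ : γ ≠ 0) (hP0 : P ≠ 0) (hX0 : X ≠ 0)
    (hg : ghat = γ ^ 2 * a / X) (hric : a ^ 2 / X = 1 / P - 1 / γ ^ 2) :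
    ghat ^ 2 = γ ^ 2 * (γ ^ 2 - P) / (P * X) := by
  have ha : a ^ 2 = X * (γ ^ 2 - P) / (P * γ ^ 2) := by
    rw [div_eq_iff hX0] at hric
    rw [hric]
    field_simp
  rw [hg, div_pow, mul_pow, ha]
  field_simp

lemma curvature_lhs_eq_neg_mul {γ P X : ℝ} (hγ : γ ≠ 0) (hX0 : X ≠ 0)
    (hX : X = P + γ ^ 2 - 1) :
    γ ^ 4 * (1 / X - 1 / γ ^ 2) = -(γ ^ 2 / ((P - 1) * X)) * (P - 1) ^ 2 := by
  field_simp
  rw [hX]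
  ring

lemma curvature_rhs_eq_neg_mul {a γ P X ghat : ℝ} (hγ : γ ≠ 0) (hP0 : P ≠ 0)
    (hX0 : X ≠ 0) (hg : ghat = γ ^ 2 * a / X) (hric : a ^ 2 / X = 1 / P - 1 / γ ^ 2) :
    -4 * (P / (P - 1)) * ghat ^ 2 = -(γ ^ 2 / ((P - 1) * X)) * (4 * (γ ^ 2 - P)) := by
  rw [sq_gain_of_riccati hγ hP0 hX0 hg hric]
  field_simp

lemma four_mul_sq_le_sq_add_one_iff {γ P : ℝ} (hγ : 0 ≤ γ) (hP : -1 ≤ P) :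
    (P + 1) ^ 2 ≥ 4 * γ ^ 2 ↔ P ≥ 2 * γ - 1 := by
  rw [ge_iff_le, show 4 * γ ^ 2 = (2 * γ) ^ 2 by ring,
    pow_le_pow_iff_left₀ (by positivity) (by linarith) two_ne_zero]
  constructor <;> intro h <;> linarith

/-- The curvature condition: with `X = P + γ² − 1`, `ĝ = γ²a/X`, `P > 1`, `γ > 0` and
the Riccati relation `a²/X = 1/P − 1/γ²`, the concavity inequality
`γ⁴(1/X − 1/γ²) ≤ −4(P/(P−1))ĝ²` holds iff `(P + 1)² ≥ 4γ²`, which (since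
`P > 1 > −1` and `γ > 0`) holds iff `P ≥ 2γ − 1`. -/
theorem curvature_condition
    (a γ P X ghat : ℝ) (hγ : 0 < γ) (hP : 1 < P)
    (hX : X = P + γ ^ 2 - 1) (hg : ghat = γ ^ 2 * a / X)
    (hric : a ^ 2 / X = 1 / P - 1 / γ ^ 2) :
    (γ ^ 4 * (1 / X - 1 / γ ^ 2) ≤ -4 * (P / (P - 1)) * ghat ^ 2
      ↔ (P + 1) ^ 2 ≥ 4 * γ ^ 2) ∧
    ((P + 1) ^ 2 ≥ 4 * γ ^ 2 ↔ P ≥ 2 * γ - 1) := by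
  have hP1 : 0 < P - 1 := sub_pos.mpr hP
  have hX0 : 0 < X := by nlinarith
  have hscale : 0 < γ ^ 2 / ((P - 1) * X) := by positivity
  refine ⟨?_, four_mul_sq_le_sq_add_one_iff hγ.le (by linarith)⟩
  rw [curvature_lhs_eq_neg_mul hγ.ne' hX0.ne' hX,
    curvature_rhs_eq_neg_mul hγ.ne' (by linarith) hX0.ne' hg hric,
    mul_le_mul_left_of_neg (neg_neg_of_pos hscale),
    show (P + 1) ^ 2 = (P - 1) ^ 2 + 4 * P by ring]
  constructor <;> intro h <;> linarith
end

section
/- Let a ∈ ℝ, γ > 0, P with γ² ≥ P > 1 and (P + 1)² ≠ 4γ², X = P + γ² − 1, ĝ = γ²·a/X, and assume a²/X = 1/P − 1/γ². Let x̂ ∈ ℝ. Then z ∈ ℝ satisfies −(P/(P−1))·x̂² + (P·x̂/2 + γ²·z)²/X − (−P·x̂/2 + γ²·z)²/γ² − P·x̂² = −4·(P/(P−1))·ĝ²·z² if and only if z = (1/(2γ²))·(P + 2γ² − 1)·((P − 1 + 2·sqrt(γ² − P))/((P + 1)² − 4γ²))·P·x̂ or z = (1/(2γ²))·(P + 2γ²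 − 1)·((P − 1 − 2·sqrt(γ² − P))/((P + 1)² − 4γ²))·P·x̂. -/
/-! The Riccati relation gives `ĝ² = γ²(γ² − P)/(P X)`, so the difference of the two sides is
`−γ²/((P − 1) X)` times the quadratic `D z² − 2 k (P − 1) z + k²`, where
`D = (P + 1)² − 4γ²` and `k = (P + 2γ² − 1) P x̂ / (2γ²)`. Since `D = u² − v²` with `u = P − 1`
and `v = 2√(γ² − P)`, that quadratic factors as `((u − v) z − k) ((u + v) z − k)`. -/

theorem mul_sq_sub_mul_add_sq_eq_zero_iff {K : Type*} [Field K] {u v D k z : K}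
    (hD : u ^ 2 - v ^ 2 = D) (hD0 : D ≠ 0) :
    D * z ^ 2 - 2 * k * u * z + k ^ 2 = 0 ↔ z = k * (u + v) / D ∨ z = k * (u - v) / D := by
  have huv : (u + v) * (u - v) = D := by rw [← hD]; ring
  have hp : u + v ≠ 0 := left_ne_zero_of_mul (huv ▸ hD0)
  have hm : u - v ≠ 0 := right_ne_zero_of_mul (huv ▸ hD0)
  have hfac : D * z ^ 2 - 2 * k * u * z + k ^ 2 = ((u - v) * z - k) * ((u + v) * z - k) := by
    rw [← huv]; ring
  have hr₁ : k * (u + v) / D = k / (u - v) := by rw [← huv]; field_simp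
  have hr₂ : k * (u - v) / D = k / (u + v) := by rw [← huv]; field_simp
  rw [hfac, mul_eq_zero, sub_eq_zero, sub_eq_zero, hr₁, hr₂, eq_div_iff hm, eq_div_iff hp,
    mul_comm z, mul_comm z]

theorem ghat_sq_of_riccati {a γ P X ghat : ℝ} (hγ : γ ≠ 0) (hP : P ≠ 0) (hX : X ≠ 0)
    (hg : ghat = γ ^ 2 * a / X) (hric : a ^ 2 / X = 1 / P - 1 / γ ^ 2) :
    ghat ^ 2 = γ ^ 2 * (γ ^ 2 - P) / (P * X) := by
  rw [hg, div_pow, mul_pow, (div_eq_iff hX).mp hric]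
  field_simp

theorem Ibar_equation_sub_eq {γ P X ghat xh z : ℝ} (hγ : γ ≠ 0) (hP : P ≠ 0) (hP1 : P - 1 ≠ 0)
    (hX0 : X ≠ 0) (hX : X = P + γ ^ 2 - 1) (hg : ghat ^ 2 = γ ^ 2 * (γ ^ 2 - P) / (P * X)) :
    (-(P / (P - 1)) * xh ^ 2 + (P * xh / 2 + γ ^ 2 * z) ^ 2 / X
        - (-(P * xh) / 2 + γ ^ 2 * z) ^ 2 / γ ^ 2 - P * xh ^ 2)
      - (-4 * (P / (P - 1)) * ghat ^ 2 * z ^ 2)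
    = -(γ ^ 2 / ((P - 1) * X)) * (((P + 1) ^ 2 - 4 * γ ^ 2) * z ^ 2
        - 2 * ((P + 2 * γ ^ 2 - 1) * P * xh / (2 * γ ^ 2)) * (P - 1) * z
        + ((P + 2 * γ ^ 2 - 1) * P * xh / (2 * γ ^ 2)) ^ 2) := by
  rw [hg]
  field_simp
  subst hX
  ring

theorem roots_Ibar_minus_one_general
    (a γ P X ghat xh : ℝ) (hP : 1 < P) (hPγ : P ≤ γ ^ 2)
    (hne : (P + 1) ^ 2 ≠ 4 * γ ^ 2)
    (hX : X = P + γ ^ 2 - 1) (hg : ghat = γ ^ 2 * a / X)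
    (hric : a ^ 2 / X = 1 / P - 1 / γ ^ 2) :
    ∀ z : ℝ,
      (-(P / (P - 1)) * xh ^ 2 + (P * xh / 2 + γ ^ 2 * z) ^ 2 / X
          - (-(P * xh) / 2 + γ ^ 2 * z) ^ 2 / γ ^ 2 - P * xh ^ 2
        = -4 * (P / (P - 1)) * ghat ^ 2 * z ^ 2)
      ↔ (z = (1 / (2 * γ ^ 2)) * (P + 2 * γ ^ 2 - 1)
            * ((P - 1 + 2 * Real.sqrt (γ ^ 2 - P)) / ((P + 1) ^ 2 - 4 * γ ^ 2))
            * P * xh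
        ∨ z = (1 / (2 * γ ^ 2)) * (P + 2 * γ ^ 2 - 1)
            * ((P - 1 - 2 * Real.sqrt (γ ^ 2 - P)) / ((P + 1) ^ 2 - 4 * γ ^ 2))
            * P * xh) := by
  intro z
  have hP1 : 0 < P - 1 := by linarith
  have hγ : γ ≠ 0 := by rintro rfl; linarith
  have hX0 : 0 < X := by rw [hX]; linarith
  have hD : (P - 1) ^ 2 - (2 * Real.sqrt (γ ^ 2 - P)) ^ 2 = (P + 1) ^ 2 - 4 * γ ^ 2 := by
    rw [mul_pow, Real.sq_sqrt (by linarith)]; ring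
  have hc : -(γ ^ 2 / ((P - 1) * X)) ≠ 0 := neg_ne_zero.mpr (by positivity)
  rw [← sub_eq_zero, Ibar_equation_sub_eq hγ (by linarith) hP1.ne' hX0.ne' hX
    (ghat_sq_of_riccati hγ (by linarith) hX0.ne' hg hric), mul_eq_zero, or_iff_right hc,
    mul_sq_sub_mul_add_sq_eq_zero_iff hD (sub_ne_zero.mpr hne)]
  congr! 2 <;> ring

/-- Root computation for the boundary of `Ī₋₁`: with `X = P + γ² − 1`, `ĝ = γ²a/X`,
the Riccati relation `a²/X = 1/P − 1/γ²`, `γ² ≥ P > 1` and `(P + 1)² ≠ 4γ²`, the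
equation
`−(P/(P−1)) x̂² + (P x̂/2 + γ² z)²/X − (−P x̂/2 + γ² z)²/γ² − P x̂² = −4 (P/(P−1)) ĝ² z²`
holds iff `z = (1/(2γ²)) (P + 2γ² − 1) ((P − 1 ± 2√(γ² − P))/((P+1)² − 4γ²)) P x̂`. -/
theorem roots_Ibar_minus_one
    (a γ P X ghat xh : ℝ) (hγ : 0 < γ) (hP : 1 < P) (hPγ : P ≤ γ ^ 2)
    (hne : (P + 1) ^ 2 ≠ 4 * γ ^ 2)
    (hX : X = P + γ ^ 2 - 1) (hg : ghat = γ ^ 2 * a / X)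
    (hric : a ^ 2 / X = 1 / P - 1 / γ ^ 2) :
    ∀ z : ℝ,
      (-(P / (P - 1)) * xh ^ 2 + (P * xh / 2 + γ ^ 2 * z) ^ 2 / X
          - (-(P * xh) / 2 + γ ^ 2 * z) ^ 2 / γ ^ 2 - P * xh ^ 2
        = -4 * (P / (P - 1)) * ghat ^ 2 * z ^ 2)
      ↔ (z = (1 / (2 * γ ^ 2)) * (P + 2 * γ ^ 2 - 1)
            * ((P - 1 + 2 * Real.sqrt (γ ^ 2 - P)) / ((P + 1) ^ 2 - 4 * γ ^ 2))
            * P * xh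
        ∨ z = (1 / (2 * γ ^ 2)) * (P + 2 * γ ^ 2 - 1)
            * ((P - 1 - 2 * Real.sqrt (γ ^ 2 - P)) / ((P + 1) ^ 2 - 4 * γ ^ 2))
            * P * xh) :=
  roots_Ibar_minus_one_general a γ P X ghat xh hP hPγ hne hX hg hric
end

section
/- In the certainty-equivalence setup, assume P > 1, the curvature condition P > 2γ − 1, and the strong negativity condition (P + 2γ² − 1)·(P − 1 − 2·sqrt(γ² − P))² ≥ (P − 1)·((P + 1)² − 4γ²). Fix t ≥ 0, x̂(t) ∈ ℝ and l₁(t), l₋₁(t) ≤ 0 with min(l₁(t), l₋₁(t)) ≤ −(P/(P−1))·x̂(t)². Then for every y(t) ∈ ℝ, the updated quantities x̂(t+1) = â·x̂(t) + 2ĝ·y(t) and l₁(t+1), l₋₁(t+1) (updated according to which of l₁(t), l₋₁(t) is larger, per the deadbeat-controller case formulas) again satisfy l₁(t+1) ≤ 0, l₋₁(t+1) ≤ 0 and min(l₁(t+1), l₋₁(t+1)) ≤ −(P/(P−1))·x̂(t+1)². -/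
set_option maxHeartbeats 1000000

lemma aux_step (γ P : ℝ) (hγ : 0 < γ) (hP1 : 1 < P) (hsP : P ≤ γ ^ 2)
    (key2sq : 4 * (γ ^ 2 - P) * (P + γ ^ 2 - 1) ^ 2 ≤ γ ^ 4 * (P - 1) ^ 2)
    (xh y lA lB : ℝ) (hlA : lA ≤ 0) (hlB : lB ≤ 0)
    (hB : lB ≤ -(P / (P - 1)) * xh ^ 2) :
    lA - γ ^ 2 * y ^ 2 + (γ ^ 2 * y) ^ 2 / (P + γ ^ 2 - 1) ≤ 0 ∧
    lB - P * xh ^ 2 - γ ^ 2 * y ^ 2 + (P * xh + γ ^ 2 * y) ^ 2 / (P + γ ^ 2 - 1) ≤ 0 ∧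
    min (lA - γ ^ 2 * y ^ 2 + (γ ^ 2 * y) ^ 2 / (P + γ ^ 2 - 1))
        (lB - P * xh ^ 2 - γ ^ 2 * y ^ 2 + (P * xh + γ ^ 2 * y) ^ 2 / (P + γ ^ 2 - 1))
      ≤ -((γ ^ 2 - P) * (P * xh + 2 * γ ^ 2 * y) ^ 2
          / ((P - 1) * γ ^ 2 * (P + γ ^ 2 - 1))) := by
  have hQ : 0 < P + γ ^ 2 - 1 := by nlinarith
  have hP1' : 0 < P - 1 := by linarith
  have eA : lA - γ ^ 2 * y ^ 2 + (γ ^ 2 * y) ^ 2 / (P + γ ^ 2 - 1)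
      = lA - (γ ^ 2 * (P - 1) * y ^ 2) / (P + γ ^ 2 - 1) := by
    field_simp
    ring
  have eB : lB - P * xh ^ 2 - γ ^ 2 * y ^ 2 + (P * xh + γ ^ 2 * y) ^ 2 / (P + γ ^ 2 - 1)
      = lB + (P / (P - 1)) * xh ^ 2
        - (γ ^ 2 * (P * xh - (P - 1) * y) ^ 2) / ((P - 1) * (P + γ ^ 2 - 1)) := by
    field_simp
    ring
  have hBB : lB + (P / (P - 1)) * xh ^ 2 ≤ 0 := by linarith
  have bA : lA - γ ^ 2 * y ^ 2 + (γ ^ 2 * y) ^ 2 / (P + γ ^ 2 - 1)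
      ≤ -((γ ^ 2 * (P - 1) * y ^ 2) / (P + γ ^ 2 - 1)) := by
    rw [eA]; linarith
  have bB : lB - P * xh ^ 2 - γ ^ 2 * y ^ 2 + (P * xh + γ ^ 2 * y) ^ 2 / (P + γ ^ 2 - 1)
      ≤ -((γ ^ 2 * (P * xh - (P - 1) * y) ^ 2) / ((P - 1) * (P + γ ^ 2 - 1))) := by
    rw [eB]; linarith
  have hDA : 0 ≤ (γ ^ 2 * (P - 1) * y ^ 2) / (P + γ ^ 2 - 1) :=
    div_nonneg (mul_nonneg (mul_nonneg (sq_nonneg γ) hP1'.le) (sq_nonneg y)) hQ.le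
  have hDB : 0 ≤ (γ ^ 2 * (P * xh - (P - 1) * y) ^ 2) / ((P - 1) * (P + γ ^ 2 - 1)) :=
    div_nonneg (mul_nonneg (sq_nonneg γ) (sq_nonneg _)) (mul_pos hP1' hQ).le
  refine ⟨by linarith, by linarith, ?_⟩
  have hc2 : 0 ≤ (P - 1) * (P + 2 * γ ^ 2 - 1) := by nlinarith
  rcases le_or_gt ((P * xh - (P - 1) * y) ^ 2) (((P - 1) * y) ^ 2) with hc | hc
  · -- use the A-branch
    have t1 : 0 ≤ (P - 1) ^ 2 * (((P - 1) * y) ^ 2 - (P * xh - (P - 1) * y) ^ 2) :=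
      mul_nonneg (sq_nonneg _) (by linarith)
    have t2 : 0 ≤ (P - 1) * (P + 2 * γ ^ 2 - 1)
        * ((P - 1) * y - (P * xh - (P - 1) * y)) ^ 2 := mul_nonneg hc2 (sq_nonneg _)
    have t3 : 0 ≤ (P - 1) * (P + 2 * γ ^ 2 - 1)
        * (((P - 1) * y) ^ 2 - (P * xh - (P - 1) * y) ^ 2) := mul_nonneg hc2 (by linarith)
    have h1 : ((P - 1) * (P * xh + 2 * γ ^ 2 * y)) ^ 2
        ≤ 4 * (P + γ ^ 2 - 1) ^ 2 * ((P - 1) * y) ^ 2 := by linarith [t1, t2, t3]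
    have h2 := mul_le_mul_of_nonneg_right key2sq (sq_nonneg ((P - 1) * y))
    have h3 := mul_le_mul_of_nonneg_left h1 (show (0:ℝ) ≤ γ ^ 2 - P by linarith)
    have claimA : (γ ^ 2 - P) * (P * xh + 2 * γ ^ 2 * y) ^ 2 ≤ γ ^ 4 * ((P - 1) * y) ^ 2 :=
      le_of_mul_le_mul_right
        (show (γ ^ 2 - P) * (P * xh + 2 * γ ^ 2 * y) ^ 2 * (P - 1) ^ 2
            ≤ γ ^ 4 * ((P - 1) * y) ^ 2 * (P - 1) ^ 2 by linarith [h2, h3])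
        (by positivity)
    refine le_trans (min_le_left _ _) (le_trans bA ?_)
    rw [neg_le_neg_iff, div_le_div_iff₀ (mul_pos (mul_pos hP1' (by positivity)) hQ) hQ]
    linarith [mul_le_mul_of_nonneg_right claimA hQ.le]
  · -- use the B-branch
    have hc' : ((P - 1) * y) ^ 2 ≤ (P * xh - (P - 1) * y) ^ 2 := hc.le
    have t1 : 0 ≤ (P + 2 * γ ^ 2 - 1) ^ 2
        * ((P * xh - (P - 1) * y) ^ 2 - ((P - 1) * y) ^ 2) :=
      mul_nonneg (sq_nonneg _) (by linarith)
    have t2 : 0 ≤ (P - 1) * (P + 2 * γ ^ 2 - 1)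
        * ((P - 1) * y - (P * xh - (P - 1) * y)) ^ 2 := mul_nonneg hc2 (sq_nonneg _)
    have t3 : 0 ≤ (P - 1) * (P + 2 * γ ^ 2 - 1)
        * ((P * xh - (P - 1) * y) ^ 2 - ((P - 1) * y) ^ 2) := mul_nonneg hc2 (by linarith)
    have h1 : ((P - 1) * (P * xh + 2 * γ ^ 2 * y)) ^ 2
        ≤ 4 * (P + γ ^ 2 - 1) ^ 2 * (P * xh - (P - 1) * y) ^ 2 := by linarith [t1, t2, t3]
    have h2 := mul_le_mul_of_nonneg_right key2sq (sq_nonneg (P * xh - (P - 1) * y))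
    have h3 := mul_le_mul_of_nonneg_left h1 (show (0:ℝ) ≤ γ ^ 2 - P by linarith)
    have claimB : (γ ^ 2 - P) * (P * xh + 2 * γ ^ 2 * y) ^ 2
        ≤ γ ^ 4 * (P * xh - (P - 1) * y) ^ 2 :=
      le_of_mul_le_mul_right
        (show (γ ^ 2 - P) * (P * xh + 2 * γ ^ 2 * y) ^ 2 * (P - 1) ^ 2
            ≤ γ ^ 4 * (P * xh - (P - 1) * y) ^ 2 * (P - 1) ^ 2 by linarith [h2, h3])
        (by positivity)
    refine le_trans (min_le_right _ _) (le_trans bB ?_)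
    rw [neg_le_neg_iff, div_le_div_iff₀ (mul_pos (mul_pos hP1' (by positivity)) hQ)
      (mul_pos hP1' hQ)]
    linarith [mul_le_mul_of_nonneg_right claimB (mul_pos hP1' hQ).le]



/-- Induction step of Theorem 3: in the certainty-equivalence setup, under `P > 1`,
the curvature condition and the strong negativity condition, if the current past costs
are nonpositive and the smaller one is at most `−(P/(P−1)) x̂(t)²`, then for every
measurement `y(t)` the updated quantities again satisfy the same conditions with
respect to `x̂(t+1) = â x̂(t) + 2ĝ y(t)`. -/
theorem min_condition_propagation
    (a γ P ahat ghat : ℝ) (hγ : 0 < γ)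
    (hP : P = (1 - γ ^ 2 * a ^ 2) / 2
        + Real.sqrt (γ ^ 2 * (γ ^ 2 - 1) + (γ ^ 2 * a ^ 2 - 1) ^ 2 / 4))
    (hahat : ahat = a * P / (P + γ ^ 2 - 1))
    (hghat : ghat = γ ^ 2 * a / (P + γ ^ 2 - 1))
    (hP1 : 1 < P)
    (hcurv : 2 * γ - 1 < P)
    (hneg : (P + 2 * γ ^ 2 - 1) * (P - 1 - 2 * Real.sqrt (γ ^ 2 - P)) ^ 2
        ≥ (P - 1) * ((P + 1) ^ 2 - 4 * γ ^ 2))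
    (t : ℕ) (xh l1 lm1 : ℝ) (hl1 : l1 ≤ 0) (hlm1 : lm1 ≤ 0)
    (hmin : min l1 lm1 ≤ -(P / (P - 1)) * xh ^ 2)
    (y : ℝ) :
    let xh' := ahat * xh + 2 * ghat * y
    let l1' := if l1 ≥ lm1
      then l1 - γ ^ 2 * y ^ 2 + (γ ^ 2 * y) ^ 2 / (P + γ ^ 2 - 1)
      else l1 - P * xh ^ 2 - γ ^ 2 * y ^ 2
        + (P * xh + γ ^ 2 * y) ^ 2 / (P + γ ^ 2 - 1)
    let lm1' := if l1 ≥ lm1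
      then lm1 - P * xh ^ 2 - γ ^ 2 * y ^ 2
        + (P * xh + γ ^ 2 * y) ^ 2 / (P + γ ^ 2 - 1)
      else lm1 - γ ^ 2 * y ^ 2 + (γ ^ 2 * y) ^ 2 / (P + γ ^ 2 - 1)
    l1' ≤ 0 ∧ lm1' ≤ 0 ∧ min l1' lm1' ≤ -(P / (P - 1)) * xh' ^ 2 := by
  have hQ : 0 < P + γ ^ 2 - 1 := by nlinarith
  have hP1' : 0 < P - 1 := by linarith
  -- derive the key algebraic identity for P
  have hrad : 0 ≤ γ ^ 2 * (γ ^ 2 - 1) + (γ ^ 2 * a ^ 2 - 1) ^ 2 / 4 := by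
    by_contra h
    push_neg at h
    rw [Real.sqrt_eq_zero_of_nonpos h.le] at hP
    nlinarith [sq_nonneg (γ * a)]
  have h1 : (P - (1 - γ ^ 2 * a ^ 2) / 2) ^ 2
      = γ ^ 2 * (γ ^ 2 - 1) + (γ ^ 2 * a ^ 2 - 1) ^ 2 / 4 := by
    rw [show P - (1 - γ ^ 2 * a ^ 2) / 2
        = Real.sqrt (γ ^ 2 * (γ ^ 2 - 1) + (γ ^ 2 * a ^ 2 - 1) ^ 2 / 4) from by linarith]
    exact Real.sq_sqrt hrad
  have key : P * (γ ^ 2 * a ^ 2) = (γ ^ 2 - P) * (P + γ ^ 2 - 1) := by linear_combination h1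
  have hsP : P ≤ γ ^ 2 := by nlinarith [key, sq_nonneg (γ * a), hQ]
  -- r = sqrt(γ² − P)
  set r := Real.sqrt (γ ^ 2 - P) with hrdef
  have hr0 : 0 ≤ r := Real.sqrt_nonneg _
  have hr2 : r ^ 2 = γ ^ 2 - P := Real.sq_sqrt (by linarith)
  have hγsq : 4 * γ ^ 2 < (P + 1) ^ 2 := by
    nlinarith [mul_pos hγ (show 0 < P + 1 - 2 * γ by linarith)]
  have hcurvr : 2 * r < P - 1 := by
    have hlt : γ ^ 2 - P < ((P - 1) / 2) ^ 2 := by nlinarith [hγsq]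
    have := Real.sqrt_lt_sqrt (by linarith : (0:ℝ) ≤ γ ^ 2 - P) hlt
    rw [Real.sqrt_sq (by linarith : (0:ℝ) ≤ (P - 1) / 2)] at this
    linarith
  have hγ2 : γ ^ 2 = P + r ^ 2 := by linarith
  rw [hγ2] at hneg
  have key2 : 2 * r * (P + γ ^ 2 - 1) ≤ γ ^ 2 * (P - 1) := by
    rw [hγ2]
    nlinarith [hneg, hcurvr, hr0]
  have key2sq : 4 * (γ ^ 2 - P) * (P + γ ^ 2 - 1) ^ 2 ≤ γ ^ 4 * (P - 1) ^ 2 := by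
    have hnn : 0 ≤ 2 * r * (P + γ ^ 2 - 1) := by positivity
    have := mul_self_le_mul_self hnn key2
    nlinarith [this, hr2]
  -- relate the target quadratic to the canonical form
  have heq : -(P / (P - 1)) * (ahat * xh + 2 * ghat * y) ^ 2
      = -((γ ^ 2 - P) * (P * xh + 2 * γ ^ 2 * y) ^ 2
          / ((P - 1) * γ ^ 2 * (P + γ ^ 2 - 1))) := by
    have hγ0 : (γ:ℝ) ^ 2 ≠ 0 := by positivity
    have hP0 : (P:ℝ) ≠ 0 := by positivity
    have hw : ahat * xh + 2 * ghat * y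
        = a * (P * xh + 2 * γ ^ 2 * y) / (P + γ ^ 2 - 1) := by
      rw [hahat, hghat]; ring
    have ha2 : a ^ 2 = (γ ^ 2 - P) * (P + γ ^ 2 - 1) / (P * γ ^ 2) := by
      field_simp
      linear_combination key
    rw [hw, div_pow, mul_pow, ha2]
    field_simp
  intro xh' l1' lm1'
  by_cases h : l1 ≥ lm1
  · have hB : lm1 ≤ -(P / (P - 1)) * xh ^ 2 := by
      rwa [min_eq_right h] at hmin
    obtain ⟨c1, c2, c3⟩ := aux_step γ P hγ hP1 hsP key2sq xh y l1 lm1 hl1 hlm1 hB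
    simp only [xh', l1', lm1', if_pos h]
    exact ⟨c1, c2, by rw [heq]; exact c3⟩
  · push_neg at h
    have hB : l1 ≤ -(P / (P - 1)) * xh ^ 2 := by
      rwa [min_eq_left h.le] at hmin
    obtain ⟨c1, c2, c3⟩ := aux_step γ P hγ hP1 hsP key2sq xh y lm1 l1 hlm1 hl1 hB
    simp only [xh', l1', lm1', if_neg (not_le.mpr h)]
    exact ⟨c2, c1, by rw [heq, min_comm]; exact c3⟩
end
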